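/- arXiv:1609.03934 — 8 statements merged into one kernel-verified Lean document; each statement's English description precedes it below -/
import Mathlib

section
/- For every n ≥ 3 there exists a 3-uniform hypergraph H on n vertices with no linear cycle, not containing K_5^3 as a subhypergraph, such that α(H) = ⌈n/2⌉. (Construction: start from a single hyperedge on 3 vertices if n is odd, or K_4^3 if n is even, and repeatedly add two new vertices v, w together with all hyperedges vwx over all old vertices x.) -/
/-- A linear cycle of length `k ≥ 3` in a 3-uniform hypergraph with edge set `E`:
an alternating cyclic sequence of distinct vertices `v i` and distinct hyperedges `h i`
with `h i ∩ h (i+1) = {v (i+1)}` and non-consecutive hyperedges disjoint. -/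
def IsLinearCycle {V : Type*} [DecidableEq V] (E : Finset (Finset V)) (k : ℕ)
    (v : ZMod k → V) (h : ZMod k → Finset V) : Prop :=
  3 ≤ k ∧ Function.Injective v ∧ Function.Injective h ∧
    (∀ i, h i ∈ E) ∧ (∀ i, h i ∩ h (i + 1) = {v (i + 1)}) ∧
    (∀ i j, i ≠ j → i + 1 ≠ j → j + 1 ≠ i → h i ∩ h j = ∅)

/-- `E` contains a linear cycle. -/
def HasLinearCycle {V : Type*} [DecidableEq V] (E : Finset (Finset V)) : Prop :=
  ∃ (k : ℕ) (v : ZMod k → V) (h : ZMod k → Finset V), IsLinearCycle E k v h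

/-- The degree of a vertex: the number of hyperedges containing it. -/
def hDegree {V : Type*} [DecidableEq V] (E : Finset (Finset V)) (v : V) : ℕ :=
  (E.filter (fun e => v ∈ e)).card

/-- The support of a vertex `v` in a hyperedge `h`: the pairs of `h` that form a
hyperedge together with `v`. -/
def hSupport {V : Type*} [DecidableEq V] (E : Finset (Finset V)) (h : Finset V) (v : V) :
    Finset (Finset V) :=
  (h.powersetCard 2).filter (fun p => insert v p ∈ E)

/-- A pair of vertices is thick if at least two hyperedges contain it. -/
def ThickPair {V : Type*} [DecidableEq V] (E : Finset (Finset V)) (a b : V) : Prop :=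
  2 ≤ (E.filter (fun e => a ∈ e ∧ b ∈ e)).card

/-- A hyperedge is thick if each of its pairs is contained in at least two hyperedges. -/
def ThickEdge {V : Type*} [DecidableEq V] (E : Finset (Finset V)) (h : Finset V) : Prop :=
  ∀ p ∈ h.powersetCard 2, 2 ≤ (E.filter (fun e => p ⊆ e)).card

/-- `v ∉ h` is strongly associated to the hyperedge `h` if at least two of the 3-sets
formed by `v` and a pair of `h` are hyperedges. -/
def StronglyAssoc {V : Type*} [DecidableEq V] (E : Finset (Finset V)) (h : Finset V) (v : V) :
    Prop :=
  v ∉ h ∧ 2 ≤ (hSupport E h v).card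

/-- A linear path of length `k` (given by its sequence of hyperedges): consecutive
hyperedges meet in exactly one vertex, non-consecutive ones are disjoint. -/
def IsLinearPath {V : Type*} [DecidableEq V] (E : Finset (Finset V)) (k : ℕ)
    (h : Fin k → Finset V) : Prop :=
  Function.Injective h ∧ (∀ i, h i ∈ E) ∧
    (∀ i j : Fin k, (i : ℕ) + 1 = (j : ℕ) → (h i ∩ h j).card = 1) ∧
    (∀ i j : Fin k, (i : ℕ) + 2 ≤ (j : ℕ) → h i ∩ h j = ∅)

/-- A linear tree with vertex set `S` and edge set `T`: built from a single vertex by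
repeatedly adding hyperedges meeting the current vertex set in exactly one vertex. -/
inductive IsLinearTree {V : Type*} [DecidableEq V] : Finset V → Finset (Finset V) → Prop
  | single (v : V) : IsLinearTree {v} ∅
  | extend {S : Finset V} {T : Finset (Finset V)} (e : Finset V) :
      IsLinearTree S T → e.card = 3 → (e ∩ S).card = 1 → IsLinearTree (S ∪ e) (insert e T)

/-!
Start from `K₄³` (`n` even) or a single edge (`n` odd) and repeatedly add two new vertices
`a, b` together with all edges `xab` over the old vertices `x`. Every edge through `a` or `b`
contains both, so two such edges share two vertices; hence no linear cycle uses one of them (its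
link vertices would lie in a second edge through `a` or `b`), and no `K₅³` contains `a` or `b`.
An independent set containing both `a` and `b` contains no old vertex, and otherwise it gains at
most one vertex, so each step raises the independence number by exactly one.
-/

open Finset

section Hypergraph

variable {V : Type*}

def IsIndep (E : Finset (Finset V)) (I : Finset V) : Prop :=
  ∀ e ∈ E, ¬ e ⊆ I

def IsClique (E : Finset (Finset V)) (S : Finset V) : Prop :=
  ∀ e ⊆ S, e.card = 3 → e ∈ E

variable {E : Finset (Finset V)} {U I S : Finset V} {a b : V}

theorem IsIndep.card_le_two (hI : IsIndep (U.powersetCard 3) I) (hIU : I ⊆ U) :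
    I.card ≤ 2 := by
  by_contra! hcard
  obtain ⟨e, heI, he⟩ := exists_subset_card_eq (show 3 ≤ I.card by omega)
  exact hI e (mem_powersetCard.2 ⟨heI.trans hIU, he⟩) heI

theorem isIndep_of_card_lt_three (hE : ∀ e ∈ E, e.card = 3) (hI : I.card < 3) :
    IsIndep E I := fun e he heI => by
  have := card_le_card heI
  have := hE e he
  omega

variable [DecidableEq V]

def twinExtension (E : Finset (Finset V)) (U : Finset V) (a b : V) : Finset (Finset V) :=
  E ∪ U.image fun x => {x, a, b}

theorem mem_twinExtension {e : Finset V} :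
    e ∈ twinExtension E U a b ↔ e ∈ E ∨ ∃ x ∈ U, {x, a, b} = e := by
  simp [twinExtension]

section LinearCycle

variable {k : ℕ} {v : ZMod k → V} {h : ZMod k → Finset V}

theorem IsLinearCycle.edge_mem (hc : IsLinearCycle E k v h) (i : ZMod k) : h i ∈ E :=
  hc.2.2.2.1 i

theorem IsLinearCycle.inter_succ (hc : IsLinearCycle E k v h) (i : ZMod k) :
    h i ∩ h (i + 1) = {v (i + 1)} :=
  hc.2.2.2.2.1 i

theorem IsLinearCycle.eq_of_mem_of_mem (hc : IsLinearCycle E k v h) (i : ZMod k) {x : V}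
    (hi : x ∈ h i) (hi' : x ∈ h (i + 1)) : x = v (i + 1) :=
  mem_singleton.1 (hc.inter_succ i ▸ mem_inter.2 ⟨hi, hi'⟩)

theorem IsLinearCycle.vertex_mem (hc : IsLinearCycle E k v h) (i : ZMod k) :
    v (i + 1) ∈ h i ∧ v (i + 1) ∈ h (i + 1) :=
  mem_inter.1 (hc.inter_succ i ▸ mem_singleton_self _)

end LinearCycle

theorem not_hasLinearCycle_of_subset_powersetCard (hE : E ⊆ U.powersetCard 3)
    (hU : U.card ≤ 4) : ¬ HasLinearCycle E := by
  rintro ⟨k, v, h, hc⟩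
  have hcard : ∀ i, h i ⊆ U ∧ (h i).card = 3 := fun i =>
    mem_powersetCard.1 (hE (hc.edge_mem i))
  have hunion := card_union_add_card_inter (h 0) (h (0 + 1))
  rw [hc.inter_succ 0, card_singleton, (hcard 0).2, (hcard _).2] at hunion
  have := card_le_card (union_subset (hcard 0).1 (hcard (0 + 1)).1)
  omega

theorem not_hasLinearCycle_twinExtension (hE : ∀ e ∈ E, e ⊆ U) (ha : a ∉ U) (hb : b ∉ U)
    (hab : a ≠ b) (hacyc : ¬ HasLinearCycle E) : ¬ HasLinearCycle (twinExtension E U a b) := by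
  rintro ⟨k, v, h, hc⟩
  have : Fact (1 < k) := ⟨by linarith [hc.1]⟩
  have twin : ∀ i, ∀ y ∈ h i, y = a ∨ y = b → a ∈ h i ∧ b ∈ h i := by
    intro i y hy hab_y
    rcases mem_twinExtension.1 (hc.edge_mem i) with hold | ⟨x, -, hx⟩
    · rcases hab_y with rfl | rfl
      · exact (ha (hE _ hold hy)).elim
      · exact (hb (hE _ hold hy)).elim
    · simp [← hx]
  -- consecutive edges share only one vertex, so they cannot both contain `a` and `b`
  have not_succ (i) (ha₁ : a ∈ h i) (hb₁ : b ∈ h i) (ha₂ : a ∈ h (i + 1))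
      (hb₂ : b ∈ h (i + 1)) : False :=
    hab ((hc.eq_of_mem_of_mem i ha₁ ha₂).trans (hc.eq_of_mem_of_mem i hb₁ hb₂).symm)
  have hedges : ∀ i, h i ∈ E := by
    intro i
    rcases mem_twinExtension.1 (hc.edge_mem i) with hold | ⟨x, -, hx⟩
    · exact hold
    have hnew : a ∈ h i ∧ b ∈ h i := by simp [← hx]
    have hprev := hc.vertex_mem (i - 1)
    rw [sub_add_cancel] at hprev
    have hnext := hc.vertex_mem i
    have hvi : ¬ (v i = a ∨ v i = b) := fun hv => by
      have := twin _ _ hprev.1 hv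
      exact not_succ (i - 1) this.1 this.2 (by simpa using hnew.1) (by simpa using hnew.2)
    have hvi' : ¬ (v (i + 1) = a ∨ v (i + 1) = b) := fun hv => by
      have := twin _ _ hnext.2 hv
      exact not_succ i hnew.1 hnew.2 this.1 this.2
    have hlink : v i ≠ v (i + 1) := fun heq => one_ne_zero (left_eq_add.1 (hc.2.1 heq))
    -- otherwise both link vertices of `h i` would be its third vertex `x`
    simp only [← hx, mem_insert, mem_singleton] at hprev hnext
    grind
  exact hacyc ⟨k, v, h, hc.1, hc.2.1, hc.2.2.1, hedges, hc.2.2.2.2⟩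

theorem IsIndep.card_le_of_twinExtension {c : ℕ}
    (hbound : ∀ J ⊆ U, IsIndep E J → J.card ≤ c) (hc : 1 ≤ c)
    (hIU : I ⊆ insert b (insert a U)) (hI : IsIndep (twinExtension E U a b) I) :
    I.card ≤ c + 1 := by
  have hold : (I ∩ U).card ≤ c := hbound _ inter_subset_right fun e he heI =>
    hI e (mem_union_left _ he) (heI.trans inter_subset_left)
  have hnew : I \ U ⊆ {a, b} := fun x hx => by
    have := hIU (mem_sdiff.1 hx).1
    simp only [mem_insert, mem_singleton] at this ⊢
    have := (mem_sdiff.1 hx).2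
    tauto
  rw [← card_inter_add_card_sdiff I U]
  by_cases hboth : a ∈ I ∧ b ∈ I
  · have hempty : I ∩ U = ∅ := eq_empty_of_forall_notMem fun x hx =>
      hI {x, a, b} (mem_twinExtension.2 (.inr ⟨x, (mem_inter.1 hx).2, rfl⟩))
        (by simp [insert_subset_iff, (mem_inter.1 hx).1, hboth.1, hboth.2])
    have := card_le_card hnew
    have := Finset.card_le_two (a := a) (b := b)
    simp only [hempty, card_empty]
    omega
  · have : (I \ U).card ≤ 1 := card_le_one.2 fun x hx y hy => by
      have hx' := hnew hx
      have hy' := hnew hy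
      simp only [mem_insert, mem_singleton] at hx' hy'
      have := (mem_sdiff.1 hx).1
      have := (mem_sdiff.1 hy).1
      grind
    omega

theorem IsIndep.insert_twinExtension (hE : ∀ e ∈ E, e ⊆ U) (ha : a ∉ U) (hb : b ∉ U)
    (hab : a ≠ b) {J : Finset V} (hJU : J ⊆ U) (hJ : IsIndep E J) :
    IsIndep (twinExtension E U a b) (insert a J) := by
  intro e he heJ
  rcases mem_twinExtension.1 he with hold | ⟨x, -, rfl⟩
  · exact hJ e hold ((subset_insert_iff_of_notMem fun h => ha (hE e hold h)).1 heJ)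
  · have : b ∈ insert a J := heJ (by simp)
    rcases mem_insert.1 this with h | h
    · exact hab h.symm
    · exact hb (hJU h)

theorem IsClique.subset_of_forall_subset (hS : IsClique E S) (hE : ∀ e ∈ E, e ⊆ U)
    (hcard : 3 ≤ S.card) : S ⊆ U := fun y hy => by
  obtain ⟨t, ht, htcard⟩ := exists_subset_card_eq (show 2 ≤ (S.erase y).card by
    rw [card_erase_of_mem hy]; omega)
  have hyt : y ∉ t := fun h => by simpa using ht h
  have hyt_card : (insert y t).card = 3 := by rw [card_insert_of_notMem hyt, htcard]
  exact hE _ (hS _ (insert_subset hy (ht.trans (erase_subset _ _))) hyt_card) (mem_insert_self _ _)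

theorem IsClique.subset_of_twinExtension (hS : IsClique (twinExtension E U a b) S)
    (hE : ∀ e ∈ E, e ⊆ U) (hab : a ≠ b) (hcard : 5 ≤ S.card) : S ⊆ U := fun y hy => by
  by_contra hyU
  have hrest : 1 < (((S.erase y).erase a).erase b).card := by
    have h1 := pred_card_le_card_erase (s := S.erase y) (a := a)
    have h2 := pred_card_le_card_erase (s := (S.erase y).erase a) (a := b)
    rw [card_erase_of_mem hy] at h1
    omega
  obtain ⟨p, hp, q, hq, hpq⟩ := one_lt_card.1 hrest
  simp only [mem_erase] at hp hq
  have htriple : ({y, p, q} : Finset V) ∈ twinExtension E U a b :=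
    hS _ (by simp [insert_subset_iff, hy, hp.2.2.2, hq.2.2.2])
      (card_eq_three.2 ⟨y, p, q, hp.2.2.1.symm, hq.2.2.1.symm, hpq, rfl⟩)
  rcases mem_twinExtension.1 htriple with hold | ⟨x, -, hx⟩
  · exact hyU (hE _ hold (by simp))
  · have ha' : a ∈ ({y, p, q} : Finset V) := hx ▸ by simp
    have hb' : b ∈ ({y, p, q} : Finset V) := hx ▸ by simp
    simp only [mem_insert, mem_singleton] at ha' hb'
    grind

theorem IsClique.of_twinExtension (hS : IsClique (twinExtension E U a b) S) (hSU : S ⊆ U)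
    (ha : a ∉ U) : IsClique E S := fun e heS he => by
  rcases mem_twinExtension.1 (hS e heS he) with hold | ⟨x, -, rfl⟩
  · exact hold
  · exact (ha (hSU (heS (by simp)))).elim

end Hypergraph

def sharpHypergraph (n : ℕ) : Finset (Finset ℕ) :=
  if n ≤ 4 then (range n).powersetCard 3
  else twinExtension (sharpHypergraph (n - 2)) (range (n - 2)) (n - 2) (n - 1)

theorem sharpHypergraph_of_le_four {n : ℕ} (hn : n ≤ 4) :
    sharpHypergraph n = (range n).powersetCard 3 := by
  rw [sharpHypergraph, if_pos hn]

theorem sharpHypergraph_add_two {m : ℕ} (hm : 3 ≤ m) :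
    sharpHypergraph (m + 2) = twinExtension (sharpHypergraph m) (range m) m (m + 1) := by
  rw [sharpHypergraph, if_neg (by omega)]
  simp

theorem Finset.range_add_two (m : ℕ) : range (m + 2) = insert (m + 1) (insert m (range m)) := by
  rw [range_add_one, range_add_one]

theorem sharpHypergraph_induction {P : ℕ → Prop} (base : ∀ n ≤ 4, P n)
    (step : ∀ m, 3 ≤ m → P m → P (m + 2)) (n : ℕ) : P n := by
  induction n using Nat.strong_induction_on with
  | _ n ih =>
    by_cases hn : n ≤ 4
    · exact base n hn
    · obtain ⟨m, rfl⟩ : ∃ m, n = m + 2 := ⟨n - 2, by omega⟩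
      exact step m (by omega) (ih m (by omega))

theorem sharpHypergraph_subset_powersetCard (n : ℕ) :
    sharpHypergraph n ⊆ (range n).powersetCard 3 := by
  induction n using sharpHypergraph_induction with
  | base n hn => rw [sharpHypergraph_of_le_four hn]
  | step m hm ih =>
    rw [sharpHypergraph_add_two hm]
    refine union_subset (ih.trans (powersetCard_mono (range_subset_range.2 (by omega)))) ?_
    simp only [image_subset_iff, mem_range, mem_powersetCard, insert_subset_iff,
      singleton_subset_iff]
    intro x hx
    exact ⟨⟨by omega, by omega, by omega⟩,
      card_eq_three.2 ⟨x, m, m + 1, by omega, by omega, by omega, rfl⟩⟩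

theorem subset_range_of_mem_sharpHypergraph {n : ℕ} {e : Finset ℕ}
    (he : e ∈ sharpHypergraph n) : e ⊆ range n :=
  (mem_powersetCard.1 (sharpHypergraph_subset_powersetCard n he)).1

theorem card_eq_three_of_mem_sharpHypergraph {n : ℕ} {e : Finset ℕ}
    (he : e ∈ sharpHypergraph n) : e.card = 3 :=
  (mem_powersetCard.1 (sharpHypergraph_subset_powersetCard n he)).2

theorem not_hasLinearCycle_sharpHypergraph (n : ℕ) : ¬ HasLinearCycle (sharpHypergraph n) := by
  induction n using sharpHypergraph_induction with
  | base n hn =>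
    rw [sharpHypergraph_of_le_four hn]
    exact not_hasLinearCycle_of_subset_powersetCard subset_rfl (by simpa using hn)
  | step m hm ih =>
    rw [sharpHypergraph_add_two hm]
    exact not_hasLinearCycle_twinExtension (fun _ => subset_range_of_mem_sharpHypergraph)
      (by simp) (by simp) (by omega) ih

theorem not_isClique_sharpHypergraph (n : ℕ) {S : Finset ℕ} (hS : S.card = 5) :
    ¬ IsClique (sharpHypergraph n) S := by
  induction n using sharpHypergraph_induction with
  | base n hn =>
    intro hcl
    have hSU := hcl.subset_of_forall_subset (fun _ => subset_range_of_mem_sharpHypergraph)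
      (by omega)
    have := card_le_card hSU
    simp only [card_range] at this
    omega
  | step m hm ih =>
    rw [sharpHypergraph_add_two hm]
    intro hcl
    have hSU := hcl.subset_of_twinExtension (fun _ => subset_range_of_mem_sharpHypergraph)
      (by omega) (by omega)
    exact ih (hcl.of_twinExtension hSU (by simp))

theorem exists_isIndep_sharpHypergraph {n : ℕ} (hn : 3 ≤ n) :
    ∃ I ⊆ range n, IsIndep (sharpHypergraph n) I ∧ I.card = (n + 1) / 2 := by
  induction n using sharpHypergraph_induction with
  | base n hn' =>
    refine ⟨range 2, range_subset_range.2 (by omega),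
      isIndep_of_card_lt_three (fun _ => card_eq_three_of_mem_sharpHypergraph) (by simp), ?_⟩
    simp only [card_range]
    omega
  | step m hm ih =>
    obtain ⟨J, hJU, hJ, hcard⟩ := ih hm
    refine ⟨insert m J, ?_, ?_, ?_⟩
    · rw [range_add_two]
      exact (insert_subset_insert _ hJU).trans (subset_insert _ _)
    · rw [sharpHypergraph_add_two hm]
      exact hJ.insert_twinExtension (fun _ => subset_range_of_mem_sharpHypergraph) (by simp)
        (by simp) (by omega) hJU
    · rw [card_insert_of_notMem fun h => by simpa using hJU h]
      omega

theorem card_le_of_isIndep_sharpHypergraph {n : ℕ} (hn : 3 ≤ n) :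
    ∀ I ⊆ range n, IsIndep (sharpHypergraph n) I → I.card ≤ (n + 1) / 2 := by
  induction n using sharpHypergraph_induction with
  | base n hn' =>
    intro I hIU hI
    rw [sharpHypergraph_of_le_four hn'] at hI
    have := hI.card_le_two hIU
    omega
  | step m hm ih =>
    intro I hIU hI
    rw [sharpHypergraph_add_two hm] at hI
    rw [range_add_two] at hIU
    have := hI.card_le_of_twinExtension (ih hm) (by omega) hIU
    omega

section Comap

variable {α β : Type*} [Fintype α] [DecidableEq β] (f : α ↪ β)

def comapEdges (E : Finset (Finset β)) : Finset (Finset α) :=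
  univ.filter fun e => e.map f ∈ E

variable {E : Finset (Finset β)}

@[simp]
theorem mem_comapEdges {e : Finset α} : e ∈ comapEdges f E ↔ e.map f ∈ E := by
  simp [comapEdges]

variable {f}

theorem HasLinearCycle.of_comapEdges [DecidableEq α] (hc : HasLinearCycle (comapEdges f E)) :
    HasLinearCycle E := by
  obtain ⟨k, v, h, hk, hv, hh, hmem, hcons, hdisj⟩ := hc
  refine ⟨k, f ∘ v, fun i => (h i).map f, hk, f.injective.comp hv,
    (map_injective f).comp hh, fun i => (mem_comapEdges f).1 (hmem i), fun i => ?_,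
    fun i j hij hij' hji => ?_⟩
  · simp [← map_inter, hcons i]
  · simp [← map_inter, hdisj i j hij hij' hji]

theorem IsClique.map_of_comapEdges {S : Finset α} (hS : IsClique (comapEdges f E) S) :
    IsClique E (S.map f) := fun e heS he => by
  obtain ⟨u, huS, rfl⟩ := subset_map_iff.1 heS
  exact (mem_comapEdges f).1 (hS u huS (by simpa using he))

theorem isIndep_comapEdges_iff {I : Finset α} :
    IsIndep (comapEdges f E) I ↔ IsIndep E (I.map f) := by
  refine ⟨fun hI e he heI => ?_, fun hI e he heI => hI _ ((mem_comapEdges f).1 he)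
    (map_subset_map.2 heI)⟩
  obtain ⟨u, huI, rfl⟩ := subset_map_iff.1 heI
  exact hI u ((mem_comapEdges f).2 he) huI

end Comap

/-- For every `n ≥ 3` there is a 3-uniform linear-cycle-free hypergraph on `n` vertices
without `K₅³` whose independence number is exactly `⌈n/2⌉`. -/
theorem independence_number_sharp (n : ℕ) (hn : 3 ≤ n) :
    ∃ E : Finset (Finset (Fin n)),
      (∀ e ∈ E, e.card = 3) ∧ ¬ HasLinearCycle E ∧
      (¬ ∃ S : Finset (Fin n), S.card = 5 ∧ ∀ e ⊆ S, e.card = 3 → e ∈ E) ∧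
      (∃ I : Finset (Fin n), (∀ e ∈ E, ¬ e ⊆ I) ∧ I.card = (n + 1) / 2) ∧
      (∀ I : Finset (Fin n), (∀ e ∈ E, ¬ e ⊆ I) → I.card ≤ (n + 1) / 2) := by
  have range_eq : range n = (univ : Finset (Fin n)).map Fin.valEmbedding := by
    simp [Nat.Iio_eq_range]
  refine ⟨comapEdges Fin.valEmbedding (sharpHypergraph n), fun e he => ?_,
    fun hc => not_hasLinearCycle_sharpHypergraph n hc.of_comapEdges,
    fun ⟨S, hS, hcl⟩ => not_isClique_sharpHypergraph n (S := S.map _) (by simpa using hS)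
      (IsClique.map_of_comapEdges hcl),
    ?_, fun I hI => ?_⟩
  · simpa using card_eq_three_of_mem_sharpHypergraph ((mem_comapEdges _).1 he)
  · obtain ⟨J, hJU, hJ, hcard⟩ := exists_isIndep_sharpHypergraph hn
    obtain ⟨I, -, rfl⟩ := subset_map_iff.1 (range_eq ▸ hJU)
    exact ⟨I, isIndep_comapEdges_iff.2 hJ, by simpa using hcard⟩
  · simpa using card_le_of_isIndep_sharpHypergraph hn _
      (range_eq ▸ map_subset_map.2 (subset_univ I)) (isIndep_comapEdges_iff.1 hI)
end

section
/- There exists a 3-uniform hypergraph on 9 vertices with no linear cycle in which every vertex has degree exactly 8. (Construction: take K_4^3 on vertices {u_1,u_2,v_1,v_2}, a vertex-disjoint copy of K_5^3, and add the hyperedges u_1u_2x and v_1v_2x for each vertex x of the K_5^3.) -/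
/-! In a linear cycle two distinct edges share at most one vertex. Hence at most one edge of the
cycle contains `{u₁, u₂}`, at most one contains `{v₁, v₂}`, and every other edge lies in the
`K_5^3`. Three edges pairwise sharing at most one vertex cover six vertices, so not all edges lie
in the `K_5^3`, and some cycle vertex `x` lies outside it. The two cycle edges through `x` are then
the two exceptional ones, and their other neighbours lie in the `K_5^3`. An exceptional edge
consists of its pair and the vertex it shares with such a neighbour, so `x` lies in both pairs,
which are disjoint. -/

open Finset

namespace Finset

variable {α : Type*} [DecidableEq α]

theorem mem_of_ne_of_mem_sdiff_of_card_le {s t : Finset α} (hst : s ⊆ t) (ht : #t ≤ #s + 1)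
    {x y : α} (hx : x ∈ t \ s) (hy : y ∈ t) (hyx : y ≠ x) : y ∈ s := by
  by_contra hys
  have hsub : {x, y} ⊆ t \ s :=
    insert_subset_iff.2 ⟨hx, singleton_subset_iff.2 (mem_sdiff.2 ⟨hy, hys⟩)⟩
  have := card_le_card hsub
  rw [card_pair hyx.symm, card_sdiff_of_subset hst] at this
  omega

theorem six_le_card_union_union {a b c : Finset α} (ha : #a = 3) (hb : #b = 3) (hc : #c = 3)
    (hab : #(a ∩ b) ≤ 1) (hac : #(a ∩ c) ≤ 1) (hbc : #(b ∩ c) ≤ 1) : 6 ≤ #(a ∪ b ∪ c) := by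
  have hab' := card_union_add_card_inter a b
  have habc := card_union_add_card_inter (a ∪ b) c
  have : #((a ∪ b) ∩ c) ≤ #(a ∩ c) + #(b ∩ c) := by
    rw [union_inter_distrib_right]
    exact card_union_le _ _
  omega

end Finset

namespace IsLinearCycle

variable {V : Type*} [DecidableEq V] {E : Finset (Finset V)} {k : ℕ} {v : ZMod k → V}
  {h : ZMod k → Finset V}

theorem one_ne_zero (hc : IsLinearCycle E k v h) : (1 : ZMod k) ≠ 0 := by
  rw [← Nat.cast_one, Ne, ZMod.natCast_eq_zero_iff]
  exact Nat.not_dvd_of_pos_of_lt Nat.one_pos (by linarith [hc.1])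

theorem two_ne_zero (hc : IsLinearCycle E k v h) : (2 : ZMod k) ≠ 0 := by
  rw [← Nat.cast_two, Ne, ZMod.natCast_eq_zero_iff]
  exact Nat.not_dvd_of_pos_of_lt Nat.two_pos (by linarith [hc.1])

theorem mem (hc : IsLinearCycle E k v h) (i : ZMod k) : h i ∈ E := hc.2.2.2.1 i

theorem apply_add_one_mem (hc : IsLinearCycle E k v h) (i : ZMod k) : v (i + 1) ∈ h i :=
  (mem_inter.1 (hc.2.2.2.2.1 i ▸ mem_singleton_self _)).1

theorem apply_mem (hc : IsLinearCycle E k v h) (i : ZMod k) : v i ∈ h i := by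
  have := (mem_inter.1 (hc.2.2.2.2.1 (i - 1) ▸ mem_singleton_self (v (i - 1 + 1)))).2
  rwa [sub_add_cancel] at this

theorem apply_add_one_ne (hc : IsLinearCycle E k v h) (i : ZMod k) : v (i + 1) ≠ v i :=
  fun e => hc.one_ne_zero (by linear_combination hc.2.1 e)

theorem card_inter_le_one (hc : IsLinearCycle E k v h) {i j : ZMod k} (hij : i ≠ j) :
    #(h i ∩ h j) ≤ 1 := by
  obtain ⟨-, -, -, -, hadj, hfar⟩ := hc
  by_cases hnext : i + 1 = j
  · simp [← hnext, hadj]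
  by_cases hprev : j + 1 = i
  · simp [← hprev, inter_comm, hadj]
  simp [hfar i j hij hnext hprev]

theorem eq_of_subset_of_subset (hc : IsLinearCycle E k v h) {S : Finset V} (hS : 2 ≤ #S)
    {i j : ZMod k} (hi : S ⊆ h i) (hj : S ⊆ h j) : i = j := by
  by_contra hij
  have := card_le_card (subset_inter hi hj)
  have := hc.card_inter_le_one hij
  omega

theorem apply_add_one_mem_of_subset (hc : IsLinearCycle E k v h) {S : Finset V} {i : ZMod k}
    (hcard : #(h i) ≤ #S + 1) (hS : S ⊆ h i) (hvi : v i ∉ S) : v (i + 1) ∈ S :=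
  mem_of_ne_of_mem_sdiff_of_card_le hS hcard (mem_sdiff.2 ⟨hc.apply_mem i, hvi⟩)
    (hc.apply_add_one_mem i) (hc.apply_add_one_ne i)

theorem apply_mem_of_subset (hc : IsLinearCycle E k v h) {S : Finset V} {i : ZMod k}
    (hcard : #(h i) ≤ #S + 1) (hS : S ⊆ h i) (hvi : v (i + 1) ∉ S) : v i ∈ S :=
  mem_of_ne_of_mem_sdiff_of_card_le hS hcard (mem_sdiff.2 ⟨hc.apply_add_one_mem i, hvi⟩)
    (hc.apply_mem i) (hc.apply_add_one_ne i).symm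

theorem not_forall_subset (hc : IsLinearCycle E k v h) (hE : ∀ e ∈ E, #e = 3)
    {R : Finset V} (hR : #R ≤ 5) : ¬ ∀ i, h i ⊆ R := by
  intro hsub
  have h01 : (0 : ZMod k) ≠ 1 := hc.one_ne_zero.symm
  have h02 : (0 : ZMod k) ≠ 2 := hc.two_ne_zero.symm
  have h12 : (1 : ZMod k) ≠ 2 := fun e => hc.one_ne_zero (by linear_combination -e)
  have hsix := six_le_card_union_union (hE _ (hc.mem 0)) (hE _ (hc.mem 1)) (hE _ (hc.mem 2))
    (hc.card_inter_le_one h01) (hc.card_inter_le_one h02) (hc.card_inter_le_one h12)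
  have := card_le_card (union_subset (union_subset (hsub 0) (hsub 1)) (hsub 2))
  omega

theorem exists_apply_add_one_mem_of_subset (hc : IsLinearCycle E k v h)
    {S : Finset V} {p : ZMod k} (hcard : #(h p) ≤ #S + 1) (hS : S ⊆ h p) :
    ∃ i, v (i + 1) ∈ S := by
  by_cases hvp : v p ∈ S
  · exact ⟨p - 1, by rwa [sub_add_cancel]⟩
  · exact ⟨p, hc.apply_add_one_mem_of_subset hcard hS hvp⟩

variable {R P Q : Finset V}

theorem eq_or_eq_or_eq_of_not_subset (hc : IsLinearCycle E k v h) (hP : 2 ≤ #P)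
    (hQ : 2 ≤ #Q) (hE : ∀ e ∈ E, e ⊆ R ∨ P ⊆ e ∨ Q ⊆ e) {a b c : ZMod k} (ha : ¬ h a ⊆ R)
    (hb : ¬ h b ⊆ R) (hc' : ¬ h c ⊆ R) : a = b ∨ a = c ∨ b = c := by
  have pair i (hi : ¬ h i ⊆ R) : P ⊆ h i ∨ Q ⊆ h i := (hE _ (hc.mem i)).resolve_left hi
  rcases pair a ha with ha | ha <;> rcases pair b hb with hb | hb <;>
    rcases pair c hc' with hc' | hc' <;>
    first
    | exact .inl (hc.eq_of_subset_of_subset ‹_› ha hb)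
    | exact .inr (.inl (hc.eq_of_subset_of_subset ‹_› ha hc'))
    | exact .inr (.inr (hc.eq_of_subset_of_subset ‹_› hb hc'))

theorem sub_one_subset_and_add_one_add_one_subset (hc : IsLinearCycle E k v h)
    (hP : 2 ≤ #P) (hQ : 2 ≤ #Q) (hE : ∀ e ∈ E, e ⊆ R ∨ P ⊆ e ∨ Q ⊆ e) {i : ZMod k}
    (hi : ¬ h i ⊆ R) (hi' : ¬ h (i + 1) ⊆ R) : h (i - 1) ⊆ R ∧ h (i + 1 + 1) ⊆ R := by
  have h1 := hc.one_ne_zero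
  have h2 := hc.two_ne_zero
  constructor <;> by_contra hout
  · rcases hc.eq_or_eq_or_eq_of_not_subset hP hQ hE hout hi hi' with e | e | e
    exacts [h1 (by linear_combination -e), h2 (by linear_combination -e),
      h1 (by linear_combination -e)]
  · rcases hc.eq_or_eq_or_eq_of_not_subset hP hQ hE hout hi hi' with e | e | e
    exacts [h2 (by linear_combination e), h1 (by linear_combination e),
      h1 (by linear_combination -e)]

end IsLinearCycle

theorem not_hasLinearCycle_of_forall_subset_or_subset {V : Type*} [DecidableEq V]
    {E : Finset (Finset V)} {R P Q : Finset V} (hR : #R ≤ 5) (hP : 2 ≤ #P)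
    (hQ : 2 ≤ #Q) (hPQ : Disjoint P Q) (hPR : Disjoint P R) (hQR : Disjoint Q R)
    (hE3 : ∀ e ∈ E, #e = 3) (hE : ∀ e ∈ E, e ⊆ R ∨ P ⊆ e ∨ Q ⊆ e) : ¬ HasLinearCycle E := by
  rintro ⟨k, v, h, hc⟩
  have hcard {S : Finset V} (hS : 2 ≤ #S) i : #(h i) ≤ #S + 1 := by
    rw [hE3 _ (hc.mem i)]; omega
  have pair i (hi : ¬ h i ⊆ R) : P ⊆ h i ∨ Q ⊆ h i := (hE _ (hc.mem i)).resolve_left hi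
  obtain ⟨i, hi⟩ : ∃ i, v (i + 1) ∉ R := by
    obtain ⟨p, hp⟩ := not_forall.1 (hc.not_forall_subset hE3 hR)
    rcases pair p hp with hPp | hQp
    · obtain ⟨i, hi⟩ := hc.exists_apply_add_one_mem_of_subset (hcard hP p) hPp
      exact ⟨i, disjoint_left.1 hPR hi⟩
    · obtain ⟨i, hi⟩ := hc.exists_apply_add_one_mem_of_subset (hcard hQ p) hQp
      exact ⟨i, disjoint_left.1 hQR hi⟩
  have hprev : ¬ h i ⊆ R := fun hs => hi (hs (hc.apply_add_one_mem i))
  have hnext : ¬ h (i + 1) ⊆ R := fun hs => hi (hs (hc.apply_mem (i + 1)))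
  obtain ⟨hlo, hhi⟩ := hc.sub_one_subset_and_add_one_add_one_subset hP hQ hE hprev hnext
  -- each of `h i`, `h (i + 1)` is its pair plus a vertex of `R`, so both pairs contain `v (i + 1)`
  have hvi : v i ∈ R := hlo (by simpa using hc.apply_add_one_mem (i - 1))
  have hvi' : v (i + 1 + 1) ∈ R := hhi (hc.apply_mem _)
  have left {S : Finset V} (hS : 2 ≤ #S) (hSR : Disjoint S R) (hSi : S ⊆ h i) : v (i + 1) ∈ S :=
    hc.apply_add_one_mem_of_subset (hcard hS i) hSi (disjoint_right.1 hSR hvi)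
  have right {S : Finset V} (hS : 2 ≤ #S) (hSR : Disjoint S R) (hSi : S ⊆ h (i + 1)) :
      v (i + 1) ∈ S :=
    hc.apply_mem_of_subset (hcard hS (i + 1)) hSi (disjoint_right.1 hSR hvi')
  have hne : i ≠ i + 1 := fun e => hc.one_ne_zero (by linear_combination -e)
  rcases pair i hprev with hPi | hQi <;> rcases pair (i + 1) hnext with hPi' | hQi'
  · exact hne (hc.eq_of_subset_of_subset hP hPi hPi')
  · exact disjoint_left.1 hPQ (left hP hPR hPi) (right hQ hQR hQi')
  · exact disjoint_left.1 hPQ (right hP hPR hPi') (left hQ hQR hQi)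
  · exact hne (hc.eq_of_subset_of_subset hQ hQi hQi')

-- `0, 1, 2, 3` play the roles of `u₁, u₂, v₁, v₂`.
def nineVertexGraph : Finset (Finset (Fin 9)) :=
  powersetCard 3 {0, 1, 2, 3} ∪ powersetCard 3 {4, 5, 6, 7, 8} ∪
    ({4, 5, 6, 7, 8} : Finset (Fin 9)).image (fun x => {0, 1, x}) ∪
    ({4, 5, 6, 7, 8} : Finset (Fin 9)).image (fun x => {2, 3, x})

set_option maxRecDepth 8000 in
theorem card_of_mem_nineVertexGraph : ∀ e ∈ nineVertexGraph, #e = 3 := by decide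

set_option maxRecDepth 40000 in
theorem subset_or_subset_of_mem_nineVertexGraph : ∀ e ∈ nineVertexGraph,
    e ⊆ {4, 5, 6, 7, 8} ∨ {0, 1} ⊆ e ∨ {2, 3} ⊆ e := by decide

set_option maxRecDepth 8000 in
theorem hDegree_nineVertexGraph : ∀ x : Fin 9, hDegree nineVertexGraph x = 8 := by decide

/-- There is a 3-uniform linear-cycle-free hypergraph on 9 vertices in which every
vertex has degree exactly 8. -/
theorem nine_vertex_example :
    ∃ E : Finset (Finset (Fin 9)),
      (∀ e ∈ E, e.card = 3) ∧ ¬ HasLinearCycle E ∧ ∀ v : Fin 9, hDegree E v = 8 :=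
  ⟨nineVertexGraph, card_of_mem_nineVertexGraph,
    not_hasLinearCycle_of_forall_subset_or_subset (by decide) (by decide) (by decide)
      (by decide) (by decide) (by decide) card_of_mem_nineVertexGraph
      subset_or_subset_of_mem_nineVertexGraph,
    hDegree_nineVertexGraph⟩
end

section
/- Let H be a 3-uniform hypergraph with no linear cycle, let abc be a thick hyperedge of H, and suppose no vertex is strongly associated to abc. Then there exist three distinct vertices v_1, v_2, v_3 outside {a,b,c} with v_1ab, v_2bc, v_3ca ∈ E(H), which form a linear cycle — a contradiction. Hence every thick hyperedge of a linear-cycle-free hypergraph has at least one vertex strongly associated to it. -/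
/-! Thickness of each side `ab`, `bc`, `ca` of `abc` yields a second hyperedge through it,
hence vertices `x, y, z` outside `{a, b, c}` with `xab, ybc, zca ∈ E`. Two of them coinciding
would give a strongly associated vertex; otherwise `xab, ybc, zca` form a linear cycle of
length 3. -/

section

variable {V : Type*} [DecidableEq V] {E : Finset (Finset V)}

theorem ne_of_card_triple_eq_three {a b c : V} (h : ({a, b, c} : Finset V).card = 3) :
    a ≠ b ∧ b ≠ c ∧ a ≠ c := by
  refine ⟨?_, ?_, ?_⟩ <;> rintro rfl <;> simp at h <;> grind [Finset.card_le_two]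

theorem pair_mem_powersetCard_two {s : Finset V} {u w : V} (hu : u ∈ s) (hw : w ∈ s)
    (huw : u ≠ w) : {u, w} ∈ s.powersetCard 2 :=
  Finset.mem_powersetCard.2 ⟨Finset.insert_subset hu (Finset.singleton_subset_iff.2 hw),
    Finset.card_pair huw⟩

theorem ThickEdge.exists_insert_mem (h3 : ∀ e ∈ E, e.card = 3) {s p : Finset V}
    (hs : ThickEdge E s) (hp : p ∈ s.powersetCard 2) (t : V) :
    ∃ x ∉ insert t p, insert x p ∈ E := by
  obtain ⟨e, he, hne⟩ := Finset.exists_mem_ne (hs p hp) (insert t p)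
  rw [Finset.mem_filter] at he
  obtain ⟨x, hxp, rfl⟩ := Finset.exists_eq_insert_iff.2
    ⟨he.2, by rw [(Finset.mem_powersetCard.1 hp).2, h3 e he.1]⟩
  refine ⟨x, ?_, he.1⟩
  rw [Finset.mem_insert, not_or]
  exact ⟨by rintro rfl; exact hne rfl, hxp⟩

theorem stronglyAssoc_of_insert_mem {s p q : Finset V} {v : V} (hv : v ∉ s)
    (hp : p ∈ s.powersetCard 2) (hq : q ∈ s.powersetCard 2) (hpq : p ≠ q)
    (hpE : insert v p ∈ E) (hqE : insert v q ∈ E) : StronglyAssoc E s v :=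
  ⟨hv, Finset.one_lt_card.2
    ⟨p, Finset.mem_filter.2 ⟨hp, hpE⟩, q, Finset.mem_filter.2 ⟨hq, hqE⟩, hpq⟩⟩

theorem hasLinearCycle_of_triangle (h3 : ∀ e ∈ E, e.card = 3) {a b c : V}
    (hab : a ≠ b) (hbc : b ≠ c) (hac : a ≠ c) {e₀ e₁ e₂ : Finset V}
    (he₀ : e₀ ∈ E) (he₁ : e₁ ∈ E) (he₂ : e₂ ∈ E)
    (h₀₁ : e₀ ∩ e₁ = {b}) (h₁₂ : e₁ ∩ e₂ = {c}) (h₂₀ : e₂ ∩ e₀ = {a}) :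
    HasLinearCycle E := by
  have ne_of_inter {e e' : Finset V} {u : V} (he : e ∈ E) (h : e ∩ e' = {u}) : e ≠ e' := by
    rintro rfl
    have := h3 e he
    rw [← Finset.inter_self e, h, Finset.card_singleton] at this
    omega
  have h₀₁' := ne_of_inter he₀ h₀₁
  have h₁₂' := ne_of_inter he₁ h₁₂
  have h₂₀' := ne_of_inter he₂ h₂₀
  refine ⟨3, ![a, b, c], ![e₀, e₁, e₂], le_rfl, ?_, ?_, ?_, ?_, ?_⟩
  · intro i j
    fin_cases i <;> fin_cases j <;>
      simp [hab, hbc, hac, hab.symm, hbc.symm, hac.symm] <;> rfl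
  · intro i j
    fin_cases i <;> fin_cases j <;>
      simp [h₀₁', h₁₂', h₂₀', h₀₁'.symm, h₁₂'.symm, h₂₀'.symm] <;> rfl
  · intro i
    fin_cases i <;> assumption
  · intro i
    fin_cases i <;> assumption
  · have : ∀ i j : ZMod 3, i ≠ j → i + 1 ≠ j → j + 1 ≠ i → False := by decide
    exact fun i j h h' h'' => (this i j h h' h'').elim

end

/-- Every thick hyperedge of a linear-cycle-free 3-uniform hypergraph has a vertex
strongly associated to it. -/
theorem thick_has_strongly_assoc {V : Type*} [DecidableEq V] (E : Finset (Finset V))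
    (h3 : ∀ e ∈ E, e.card = 3) (hcyc : ¬ HasLinearCycle E) (a b c : V)
    (habc : ({a, b, c} : Finset V) ∈ E) (hthick : ThickEdge E {a, b, c}) :
    ∃ v : V, StronglyAssoc E {a, b, c} v := by
  obtain ⟨hab, hbc, hac⟩ := ne_of_card_triple_eq_three (h3 _ habc)
  have hpab := pair_mem_powersetCard_two (s := {a, b, c}) (by simp) (by simp) hab
  have hpbc := pair_mem_powersetCard_two (s := {a, b, c}) (by simp) (by simp) hbc
  have hpca := pair_mem_powersetCard_two (s := {a, b, c}) (by simp) (by simp) hac.symm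
  obtain ⟨x, hx, hxE⟩ := hthick.exists_insert_mem h3 hpab c
  obtain ⟨y, hy, hyE⟩ := hthick.exists_insert_mem h3 hpbc a
  obtain ⟨z, hz, hzE⟩ := hthick.exists_insert_mem h3 hpca b
  simp only [Finset.mem_insert, Finset.mem_singleton, not_or] at hx hy hz
  by_contra! hnone
  have hxy : x ≠ y := fun h => hnone x <| stronglyAssoc_of_insert_mem (by simp; tauto) hpab hpbc
    (ne_of_mem_of_not_mem' (a := a) (by simp) (by simp [hab, hac])) hxE (h ▸ hyE)
  have hyz : y ≠ z := fun h => hnone y <| stronglyAssoc_of_insert_mem (by simp; tauto) hpbc hpca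
    (ne_of_mem_of_not_mem' (a := b) (by simp) (by simp [hbc, hab.symm])) hyE (h ▸ hzE)
  have hzx : z ≠ x := fun h => hnone z <| stronglyAssoc_of_insert_mem (by simp; tauto) hpca hpab
    (ne_of_mem_of_not_mem' (a := c) (by simp) (by simp [hac.symm, hbc.symm])) hzE (h ▸ hxE)
  exact hcyc (hasLinearCycle_of_triangle h3 hab hbc hac hxE hyE hzE
    (by ext; simp; grind) (by ext; simp; grind) (by ext; simp; grind))
end

section
/- Let H be a 3-uniform hypergraph with no linear cycle and let abc ∈ E(H) be a thick hyperedge. If two distinct vertices p, q are strongly associated to abc, then no other vertex is associated to abc (i.e., for every vertex r ∉ {a,b,c,p,q}, none of rab, rbc, rca is a hyperedge of H). -/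
open Finset

theorem card_le_card_biUnion_of_three {ι α : Type*} [Fintype ι] [DecidableEq α]
    (hι : Fintype.card ι = 3) {t : ι → Finset α} (hne : ∀ i, (t i).Nonempty) {p q r : α}
    (hpq : p ≠ q) (hpr : p ≠ r) (hqr : q ≠ r)
    (hp : ∀ j, ∃ i ≠ j, p ∈ t i) (hq : ∀ j, ∃ i ≠ j, q ∈ t i) (hr : ∃ i, r ∈ t i)
    (s : Finset ι) : #s ≤ #(s.biUnion t) := by
  classical
  by_cases hs : s = univ
  · subst hs
    obtain ⟨i, hi⟩ := hr
    obtain ⟨j, -, hj⟩ := hp i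
    obtain ⟨k, -, hk⟩ := hq i
    have hsub : {p, q, r} ⊆ univ.biUnion t := by
      simp only [insert_subset_iff, singleton_subset_iff, mem_biUnion, mem_univ, true_and]
      exact ⟨⟨j, hj⟩, ⟨k, hk⟩, ⟨i, hi⟩⟩
    calc #(univ : Finset ι) = #({p, q, r} : Finset α) := by
          rw [card_univ, hι, card_eq_three.mpr ⟨p, q, r, hpq, hpr, hqr, rfl⟩]
      _ ≤ _ := card_le_card hsub
  obtain ⟨j, hj⟩ : ∃ j, j ∉ s := by simpa [eq_univ_iff_forall] using hs
  have hs_sub : s ⊆ univ.erase j := fun i hi =>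
    mem_erase.mpr ⟨ne_of_mem_of_not_mem hi hj, mem_univ i⟩
  have hcard_erase : #(univ.erase j) = 2 := by rw [card_erase_of_mem (mem_univ j), card_univ, hι]
  by_cases h2 : #s = 2
  · obtain rfl : s = univ.erase j := eq_of_subset_of_card_le hs_sub (by omega)
    obtain ⟨i, hij, hi⟩ := hp j
    obtain ⟨k, hkj, hk⟩ := hq j
    have hsub : {p, q} ⊆ (univ.erase j).biUnion t := by
      simp only [insert_subset_iff, singleton_subset_iff, mem_biUnion, mem_erase, mem_univ,
        and_true]
      exact ⟨⟨i, hij, hi⟩, ⟨k, hkj, hk⟩⟩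
    calc _ = #({p, q} : Finset α) := by rw [h2, card_pair hpq]
      _ ≤ _ := card_le_card hsub
  · rcases s.eq_empty_or_nonempty with rfl | ⟨i, hi⟩
    · simp
    obtain ⟨x, hx⟩ := hne i
    have hpos : 0 < #(s.biUnion t) := card_pos.mpr ⟨x, mem_biUnion.mpr ⟨i, hi, hx⟩⟩
    have := card_le_card hs_sub
    omega

/-- Hall's marriage theorem for three sets. -/
theorem exists_injective_of_three {ι α : Type*} [Fintype ι] (hι : Fintype.card ι = 3)
    (P : ι → α → Prop) (hne : ∀ i, ∃ x, P i x) {p q r : α}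
    (hpq : p ≠ q) (hpr : p ≠ r) (hqr : q ≠ r)
    (hp : ∀ j, ∃ i ≠ j, P i p) (hq : ∀ j, ∃ i ≠ j, P i q) (hr : ∃ i, P i r) :
    ∃ f : ι → α, Function.Injective f ∧ ∀ i, P i (f i) := by
  classical
  choose w hw using hne
  -- Only finitely many candidates matter, so Hall's theorem for finsets applies.
  let t : ι → Finset α := fun i => ({p, q, r} ∪ univ.image w).filter (P i)
  have mem_t {i x} (hx : x ∈ ({p, q, r} ∪ univ.image w)) (h : P i x) : x ∈ t i :=
    mem_filter.mpr ⟨hx, h⟩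
  obtain ⟨f, hf, hft⟩ := (all_card_le_biUnion_card_iff_exists_injective t).mp
    (card_le_card_biUnion_of_three hι (fun i => ⟨w i, mem_t (by simp) (hw i)⟩) hpq hpr hqr
      (fun j => (hp j).imp fun i ⟨hij, h⟩ => ⟨hij, mem_t (by simp) h⟩)
      (fun j => (hq j).imp fun i ⟨hij, h⟩ => ⟨hij, mem_t (by simp) h⟩)
      (hr.imp fun i h => mem_t (by simp) h))
  exact ⟨f, hf, fun i => (mem_filter.mp (hft i)).2⟩

section Triangle

variable {V : Type*} [DecidableEq V]

theorem exists_injective_image_eq_of_card_eq_three {T : Finset V} (hT : #T = 3) :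
    ∃ v : ZMod 3 → V, Function.Injective v ∧ univ.image v = T := by
  let e := T.equivFinOfCardEq hT
  refine ⟨fun i => e.symm i, Subtype.val_injective.comp e.symm.injective, ?_⟩
  ext x
  simp only [mem_image, mem_univ, true_and]
  exact ⟨by rintro ⟨i, rfl⟩; exact (e.symm i).2, fun hx => ⟨e ⟨x, hx⟩, by simp⟩⟩

theorem pair_mem_powersetCard_image {v : ZMod 3 → V} (hv : Function.Injective v) (i : ZMod 3) :
    {v i, v (i + 1)} ∈ (univ.image v).powersetCard 2 := by
  have : i ≠ i + 1 := by revert i; decide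
  refine mem_powersetCard.mpr ⟨?_, card_pair (hv.ne this)⟩
  simp [insert_subset_iff]

theorem exists_eq_pair_of_mem_powersetCard_image {v : ZMod 3 → V} {s : Finset V}
    (hs : s ∈ (univ.image v).powersetCard 2) : ∃ i, s = {v i, v (i + 1)} := by
  obtain ⟨hsv, hs2⟩ := mem_powersetCard.mp hs
  obtain ⟨x, y, hxy, rfl⟩ := card_eq_two.mp hs2
  obtain ⟨i, rfl⟩ : ∃ i, v i = x := by simpa using hsv (mem_insert_self x {y})
  obtain ⟨j, rfl⟩ : ∃ j, v j = y := by simpa using hsv (by simp)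
  have adjacent : ∀ i j : ZMod 3, i ≠ j → j = i + 1 ∨ i = j + 1 := by decide
  rcases adjacent i j (fun h => hxy (h ▸ rfl)) with rfl | rfl
  · exact ⟨i, rfl⟩
  · exact ⟨j, pair_comm _ _⟩

variable {E : Finset (Finset V)}

theorem hasLinearCycle_of_apexes {v f : ZMod 3 → V} (hv : Function.Injective v)
    (hf : Function.Injective f) (hfv : ∀ i j, f i ≠ v j) (hE : ∀ i, {f i, v i, v (i + 1)} ∈ E) :
    HasLinearCycle E := by
  have h₁ : ∀ i : ZMod 3, i ≠ i + 1 := by decide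
  have h₂ : ∀ i : ZMod 3, i ≠ i + 1 + 1 := by decide
  refine ⟨3, v, fun i => {f i, v i, v (i + 1)}, le_rfl, hv, ?_, hE, ?_, ?_⟩
  · intro i j hij
    simp only at hij
    have : f i ∈ ({f j, v j, v (j + 1)} : Finset V) := hij ▸ mem_insert_self _ _
    simpa [hfv, hf.eq_iff] using this
  · intro i
    ext u
    simp only [mem_inter, mem_insert, mem_singleton]
    refine ⟨?_, fun hu => ⟨Or.inr (Or.inr hu), Or.inr (Or.inl hu)⟩⟩
    rintro ⟨hu | hu | hu, hu' | hu' | hu'⟩ <;> subst hu <;>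
      simp_all [hf.eq_iff, hv.eq_iff, (hfv _ _).symm]
  · intro i j _ _ hji
    exact absurd hji (by revert i j; decide)

theorem exists_apex_of_two_le_card (h3 : ∀ e ∈ E, #e = 3) {T s : Finset V} (hT : #T = 3)
    (hsT : s ⊆ T) (hs : #s = 2) (h : 2 ≤ #(E.filter (s ⊆ ·))) :
    ∃ w ∉ T, insert w s ∈ E := by
  obtain ⟨e, he, heT⟩ := exists_mem_ne h T
  obtain ⟨heE, hse⟩ := mem_filter.mp he
  obtain ⟨w, hws, rfl⟩ := exists_eq_insert_iff.mpr ⟨hse, by rw [hs, h3 _ heE]⟩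
  refine ⟨w, fun hwT => heT ?_, heE⟩
  exact eq_of_subset_of_card_le (insert_subset hwT hsT) (by rw [hT, h3 _ heE])

theorem exists_ne_pair_of_stronglyAssoc_image {v : ZMod 3 → V} {x : V}
    (hx : StronglyAssoc E (univ.image v) x) (j : ZMod 3) :
    ∃ i ≠ j, insert x {v i, v (i + 1)} ∈ E := by
  obtain ⟨s, hs, hsj⟩ := exists_mem_ne hx.2 {v j, v (j + 1)}
  obtain ⟨hs₂, hsE⟩ := mem_filter.mp hs
  obtain ⟨i, rfl⟩ := exists_eq_pair_of_mem_powersetCard_image hs₂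
  exact ⟨i, fun hij => hsj (hij ▸ rfl), hsE⟩

theorem hSupport_eq_empty_of_stronglyAssoc (h3 : ∀ e ∈ E, #e = 3) (hcyc : ¬ HasLinearCycle E)
    {T : Finset V} (hT : #T = 3) (hthick : ThickEdge E T) {p q r : V} (hpq : p ≠ q)
    (hp : StronglyAssoc E T p) (hq : StronglyAssoc E T q) (hrT : r ∉ T) (hrp : r ≠ p)
    (hrq : r ≠ q) : hSupport E T r = ∅ := by
  obtain ⟨v, hv, rfl⟩ := exists_injective_image_eq_of_card_eq_three hT
  rw [← not_nonempty_iff_eq_empty]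
  rintro ⟨s, hs⟩
  let IsApex (i : ZMod 3) (x : V) : Prop := x ∉ univ.image v ∧ insert x {v i, v (i + 1)} ∈ E
  have apex_exists (i : ZMod 3) : ∃ x, IsApex i x := by
    have hside := pair_mem_powersetCard_image hv i
    exact exists_apex_of_two_le_card h3 hT (mem_powersetCard.mp hside).1
      (mem_powersetCard.mp hside).2 (hthick _ hside)
  have apex_of_strong {x : V} (hx : StronglyAssoc E (univ.image v) x) (j : ZMod 3) :
      ∃ i ≠ j, IsApex i x :=
    (exists_ne_pair_of_stronglyAssoc_image hx j).imp fun _ ⟨hij, hE⟩ => ⟨hij, hx.1, hE⟩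
  have apex_r : ∃ i, IsApex i r := by
    obtain ⟨hs₂, hsE⟩ := mem_filter.mp hs
    obtain ⟨i, rfl⟩ := exists_eq_pair_of_mem_powersetCard_image hs₂
    exact ⟨i, hrT, hsE⟩
  obtain ⟨f, hf, hfa⟩ := exists_injective_of_three (ZMod.card 3) IsApex apex_exists hpq
    hrp.symm hrq.symm (apex_of_strong hp) (apex_of_strong hq) apex_r
  refine hcyc (hasLinearCycle_of_apexes hv hf (fun i j hij => (hfa i).1 ?_) fun i => (hfa i).2)
  exact hij ▸ mem_image_of_mem v (mem_univ j)

end Triangle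

/-- If two distinct vertices `p, q` are strongly associated to a thick hyperedge `abc`
of a linear-cycle-free hypergraph, then no other vertex is associated to `abc`. -/
theorem two_strong_no_other_assoc {V : Type*} [DecidableEq V] (E : Finset (Finset V))
    (h3 : ∀ e ∈ E, e.card = 3) (hcyc : ¬ HasLinearCycle E) (a b c : V)
    (habc : ({a, b, c} : Finset V) ∈ E) (hthick : ThickEdge E {a, b, c}) (p q : V)
    (hpq : p ≠ q) (hp : StronglyAssoc E {a, b, c} p) (hq : StronglyAssoc E {a, b, c} q) :
    ∀ r : V, r ∉ ({a, b, c, p, q} : Finset V) → hSupport E {a, b, c} r = ∅ := by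
  intro r hr
  simp only [mem_insert, mem_singleton, not_or] at hr
  obtain ⟨hra, hrb, hrc, hrp, hrq⟩ := hr
  exact hSupport_eq_empty_of_stronglyAssoc h3 hcyc (h3 _ habc) hthick hpq hp hq
    (by simp [hra, hrb, hrc]) hrp hrq
end

section
/- Let H be a 3-uniform hypergraph with no linear cycle, and suppose there exist distinct vertices u, v such that uvx ∈ E(H) for all x ∈ V(H) \ {u,v}. Suppose xyu ∈ E(H) with x, y ∈ V(H) \ {u,v}, and xab ∈ E(H) with a, b ∈ V(H) \ {u,v,x}. If |V(H)| ≥ 6, then y ∈ {a,b}. -/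
theorem injective_vecCons_three {α : Type*} {a b c : α} (hab : a ≠ b) (hbc : b ≠ c)
    (hca : c ≠ a) : Function.Injective ![a, b, c] := by
  intro i j hij
  fin_cases i <;> fin_cases j <;> first | rfl | simp_all [eq_comm]

theorem hasLinearCycle_of_triangle_s11 {V : Type*} [DecidableEq V] {E : Finset (Finset V)}
    {h₀ h₁ h₂ : Finset V} (h₀E : h₀ ∈ E) (h₁E : h₁ ∈ E) (h₂E : h₂ ∈ E) {p₀ p₁ p₂ : V}
    (hp₀₁ : p₀ ≠ p₁) (hp₁₂ : p₁ ≠ p₂) (hp₂₀ : p₂ ≠ p₀)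
    (h₀₁ : h₀ ∩ h₁ = {p₁}) (h₁₂ : h₁ ∩ h₂ = {p₂}) (h₂₀ : h₂ ∩ h₀ = {p₀}) :
    HasLinearCycle E := by
  -- Two equal sides would be a single vertex, so the other two corners would coincide.
  have side_ne {s t r : Finset V} {p q : V} (hst : s ∩ t = {p}) (hrs : r ∩ s = {q})
      (hqp : q ≠ p) : s ≠ t := by
    rintro rfl
    rw [Finset.inter_self] at hst
    have hq : q ∈ s := Finset.mem_of_mem_inter_right (hrs ▸ Finset.mem_singleton_self q)
    exact hqp (Finset.mem_singleton.mp (hst ▸ hq))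
  have all_adjacent : ∀ i j : ZMod 3, i ≠ j → i + 1 ≠ j → j + 1 ≠ i → False := by decide
  refine ⟨3, ![p₀, p₁, p₂], ![h₀, h₁, h₂], le_rfl, injective_vecCons_three hp₀₁ hp₁₂ hp₂₀,
    injective_vecCons_three (side_ne h₀₁ h₂₀ hp₀₁) (side_ne h₁₂ h₀₁ hp₁₂)
      (side_ne h₂₀ h₁₂ hp₂₀), ?_, ?_,
    fun i j hij hij₁ hji₁ ↦ (all_adjacent i j hij hij₁ hji₁).elim⟩
  · intro i
    fin_cases i <;> assumption
  · intro i
    fin_cases i <;> assumption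

theorem y_in_ab_general {V : Type*} [DecidableEq V] (E : Finset (Finset V))
    (hcyc : ¬ HasLinearCycle E) (u v : V)
    (huniv : ∀ x : V, x ≠ u → x ≠ v → ({u, v, x} : Finset V) ∈ E)
    (x y : V) (hx : x ≠ u ∧ x ≠ v) (hy : y ≠ u ∧ y ≠ v)
    (hxyu : ({x, y, u} : Finset V) ∈ E)
    (a b : V) (ha : a ≠ u ∧ a ≠ v ∧ a ≠ x) (hb : b ≠ u ∧ b ≠ v ∧ b ≠ x)
    (hxab : ({x, a, b} : Finset V) ∈ E) :
    y = a ∨ y = b := by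
  by_contra! hyab
  -- Otherwise `xyu`, `xab`, `uva` form a linear triangle with corners `x`, `a`, `u`.
  refine hcyc (hasLinearCycle_of_triangle_s11 hxyu hxab (huniv a ha.1 ha.2.1)
    (p₀ := u) (p₁ := x) (p₂ := a) hx.1.symm ha.2.2.symm ha.1 ?_ ?_ ?_) <;>
  · ext w
    simp only [Finset.mem_inter, Finset.mem_insert, Finset.mem_singleton]
    grind

/-- Claim about hypergraphs with a "universal pair" `u, v`: if `xyu ∈ E` and
`xab ∈ E` with `a, b ∉ {u,v,x}`, then `y ∈ {a, b}`. -/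
theorem y_in_ab {V : Type*} [Fintype V] [DecidableEq V] (E : Finset (Finset V))
    (h3 : ∀ e ∈ E, e.card = 3) (hcyc : ¬ HasLinearCycle E) (u v : V) (huv : u ≠ v)
    (huniv : ∀ x : V, x ≠ u → x ≠ v → ({u, v, x} : Finset V) ∈ E)
    (x y : V) (hx : x ≠ u ∧ x ≠ v) (hy : y ≠ u ∧ y ≠ v) (hxy : x ≠ y)
    (hxyu : ({x, y, u} : Finset V) ∈ E)
    (a b : V) (hab : a ≠ b) (ha : a ≠ u ∧ a ≠ v ∧ a ≠ x) (hb : b ≠ u ∧ b ≠ v ∧ b ≠ x)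
    (hxab : ({x, a, b} : Finset V) ∈ E) (hn : 6 ≤ Fintype.card V) :
    y = a ∨ y = b :=
  y_in_ab_general E hcyc u v huniv x y hx hy hxyu a b ha hb hxab
end

section
/- Let H be a 3-uniform hypergraph with no linear cycle, and suppose there exist distinct u, v ∈ V(H) such that uvw ∈ E(H) for all w ∈ V(H) \ {u,v}. If x, y ∈ V(H) \ {u,v}, xyu ∈ E(H), and |V(H)| ≥ 6, then it cannot happen that xau ∈ E(H) and xbv ∈ E(H) for distinct a, b ∈ V(H) \ {u,v,x}. -/
/-- With a universal pair `u, v` and `xyu ∈ E`, it cannot happen that `xau ∈ E` and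
`xbv ∈ E` for distinct `a, b ∉ {u, v, x}`. -/
theorem no_crossing {V : Type*} [Fintype V] [DecidableEq V] (E : Finset (Finset V))
    (h3 : ∀ e ∈ E, e.card = 3) (hcyc : ¬ HasLinearCycle E) (u v : V) (huv : u ≠ v)
    (huniv : ∀ w : V, w ≠ u → w ≠ v → ({u, v, w} : Finset V) ∈ E)
    (x y : V) (hx : x ≠ u ∧ x ≠ v) (hy : y ≠ u ∧ y ≠ v) (hxy : x ≠ y)
    (hxyu : ({x, y, u} : Finset V) ∈ E) (hn : 6 ≤ Fintype.card V) :
    ∀ a b : V, a ≠ b → (a ≠ u ∧ a ≠ v ∧ a ≠ x) → (b ≠ u ∧ b ≠ v ∧ b ≠ x) →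
      ¬ (({x, a, u} : Finset V) ∈ E ∧ ({x, b, v} : Finset V) ∈ E) := by
  rintro a b hab ⟨hau, hav, hax⟩ ⟨hbu, hbv, hbx⟩ ⟨hxau, hxbv⟩
  obtain ⟨hxu, hxv⟩ := hx
  have hc : ∃ c : V, c ∉ ({u, v, a, b, x} : Finset V) := by
    by_contra hall
    push_neg at hall
    have hsub : (Finset.univ : Finset V) ⊆ {u, v, a, b, x} := fun c _ => hall c
    have hle := Finset.card_le_card hsub
    have h5 : ({u, v, a, b, x} : Finset V).card ≤ 5 := by
      apply le_trans (Finset.card_insert_le _ _)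
      apply Nat.succ_le_succ
      apply le_trans (Finset.card_insert_le _ _)
      apply Nat.succ_le_succ
      apply le_trans (Finset.card_insert_le _ _)
      apply Nat.succ_le_succ
      apply le_trans (Finset.card_insert_le _ _)
      apply Nat.succ_le_succ
      simp
    rw [Finset.card_univ] at hle
    omega
  obtain ⟨c, hc⟩ := hc
  simp only [Finset.mem_insert, Finset.mem_singleton, not_or] at hc
  obtain ⟨hcu, hcv, hca, hcb, hcx⟩ := hc
  have hE2 : ({u, v, c} : Finset V) ∈ E := huniv c hcu hcv
  -- the three edges and key set facts
  have e01 : ({x, a, u} : Finset V) ∩ {u, v, c} = {u} := by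
    ext z
    simp only [Finset.mem_inter, Finset.mem_insert, Finset.mem_singleton]
    constructor
    · rintro ⟨(rfl | rfl | rfl), (h | h | h)⟩ <;> simp_all
    · rintro rfl; tauto
  have e12 : ({u, v, c} : Finset V) ∩ {x, b, v} = {v} := by
    ext z
    simp only [Finset.mem_inter, Finset.mem_insert, Finset.mem_singleton]
    constructor
    · rintro ⟨(rfl | rfl | rfl), (h | h | h)⟩ <;> simp_all
    · rintro rfl; tauto
  have e20 : ({x, b, v} : Finset V) ∩ {x, a, u} = {x} := by
    ext z
    simp only [Finset.mem_inter, Finset.mem_insert, Finset.mem_singleton]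
    constructor
    · rintro ⟨(rfl | rfl | rfl), (h | h | h)⟩ <;> simp_all
    · rintro rfl; tauto
  have ne01 : ({x, a, u} : Finset V) ≠ {u, v, c} := by
    intro h
    have : x ∈ ({u, v, c} : Finset V) := h ▸ (by simp)
    simp only [Finset.mem_insert, Finset.mem_singleton] at this
    rcases this with h | h | h <;> simp_all
  have ne12 : ({u, v, c} : Finset V) ≠ {x, b, v} := by
    intro h
    have : u ∈ ({x, b, v} : Finset V) := h ▸ (by simp)
    simp only [Finset.mem_insert, Finset.mem_singleton] at this
    rcases this with h | h | h <;> simp_all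
  have ne02 : ({x, a, u} : Finset V) ≠ {x, b, v} := by
    intro h
    have : u ∈ ({x, b, v} : Finset V) := h ▸ (by simp)
    simp only [Finset.mem_insert, Finset.mem_singleton] at this
    rcases this with h | h | h <;> simp_all
  apply hcyc
  have hcases : ∀ i : ZMod 3, i = 0 ∨ i = 1 ∨ i = 2 := by decide
  have n10 : (1 : ZMod 3) ≠ 0 := by decide
  have n20 : (2 : ZMod 3) ≠ 0 := by decide
  have n21 : (2 : ZMod 3) ≠ 1 := by decide
  have z01 : (0 : ZMod 3) + 1 = 1 := by decide
  have z12 : (1 : ZMod 3) + 1 = 2 := by decide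
  have z20 : (2 : ZMod 3) + 1 = 0 := by decide
  refine ⟨3, fun i => if i = 0 then x else if i = 1 then u else v,
    fun i => if i = 0 then ({x, a, u} : Finset V) else if i = 1 then {u, v, c} else {x, b, v},
    ?_, ?_, ?_, ?_, ?_, ?_⟩
  · norm_num
  · intro i j hij
    rcases hcases i with rfl | rfl | rfl <;> rcases hcases j with rfl | rfl | rfl <;>
      simp only [if_pos rfl, if_neg n10, if_neg n20, if_neg n21] at hij <;>
      first | rfl | (exact absurd hij (by assumption)) | (exact absurd hij.symm (by assumption))
  · intro i j hij
    rcases hcases i with rfl | rfl | rfl <;> rcases hcases j with rfl | rfl | rfl <;>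
      simp only [if_pos rfl, if_neg n10, if_neg n20, if_neg n21] at hij <;>
      first | rfl
            | (exact absurd hij ne01) | (exact absurd hij.symm ne01)
            | (exact absurd hij ne12) | (exact absurd hij.symm ne12)
            | (exact absurd hij ne02) | (exact absurd hij.symm ne02)
  · intro i
    rcases hcases i with rfl | rfl | rfl <;>
      simp only [if_pos rfl, if_neg n10, if_neg n20, if_neg n21] <;> assumption
  · intro i
    rcases hcases i with rfl | rfl | rfl <;>
      simp only [z01, z12, z20, if_pos rfl, if_neg n10, if_neg n20, if_neg n21]
    · exact e01
    · exact e12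
    · exact e20
  · intro i j h1 h2 h3
    exfalso
    rcases hcases i with rfl | rfl | rfl <;> rcases hcases j with rfl | rfl | rfl <;>
      revert h1 h2 h3 <;> decide
end

section
/- Let T be a linear tree (as a 3-uniform hypergraph) inside a 3-uniform hypergraph H with no linear cycle, and suppose all hyperedges of T contain a common vertex b, with E(T) = {v_1v_2b, v_3v_4b, ..., v_{2s−1}v_{2s}b} for some s ≥ 3, and suppose the longest linear path in H has length at most 2. Then v_iv_jv_k ∉ E(H) for any distinct i, j, k ∈ {1,...,2s}; that is, every hyperedge of H contained in V(T) contains b. -/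
/-!
The star edges `S_t = {v_{2t-1}, v_{2t}, b}` pairwise meet exactly in `b`. Let `e` be a hyperedge
on the `v`'s. If `e` contains both vertices of some `S_t`, its third vertex lies in another star
edge `S_u`, and any third star edge `S_r` (here `s ≥ 3` is used) gives the linear path
`S_r, S_u, e` of length 3. Otherwise `e` meets three star edges in one vertex each, and two of
them together with `e` form a linear cycle of length 3.
-/

theorem isLinearPath_three {V : Type*} [DecidableEq V] {E : Finset (Finset V)}
    {f₀ f₁ f₂ : Finset V} (h₀ : f₀ ∈ E) (h₁ : f₁ ∈ E) (h₂ : f₂ ∈ E)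
    (h₀₁ : (f₀ ∩ f₁).card = 1) (h₁₂ : (f₁ ∩ f₂).card = 1) (h₀₂ : f₀ ∩ f₂ = ∅) :
    IsLinearPath E 3 ![f₀, f₁, f₂] := by
  have ne₀₁ : f₀ ≠ f₁ := by rintro rfl; simp [h₀₂] at h₁₂
  have ne₁₂ : f₁ ≠ f₂ := by rintro rfl; simp [h₀₂] at h₀₁
  have ne₀₂ : f₀ ≠ f₂ := by rintro rfl; simp_all
  refine ⟨?_, ?_, ?_, ?_⟩
  · intro x y hxy
    fin_cases x <;> fin_cases y <;> simp_all [eq_comm]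
  · intro x
    fin_cases x <;> assumption
  · intro x y hxy
    fin_cases x <;> fin_cases y <;> simp_all
  · intro x y hxy
    fin_cases x <;> fin_cases y <;> simp_all

theorem hasLinearCycle_of_triangle_s15 {V : Type*} [DecidableEq V] {E : Finset (Finset V)}
    {f₀ f₁ f₂ : Finset V} {x y z : V} (h₀ : f₀ ∈ E) (h₁ : f₁ ∈ E) (h₂ : f₂ ∈ E)
    (hxy : x ≠ y) (hyz : y ≠ z) (hxz : x ≠ z)
    (h₀₁ : f₀ ∩ f₁ = {x}) (h₁₂ : f₁ ∩ f₂ = {y}) (h₂₀ : f₂ ∩ f₀ = {z}) :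
    HasLinearCycle E := by
  have ne₀₁ : f₀ ≠ f₁ := by
    rintro rfl; rw [Finset.inter_comm, h₁₂, Finset.singleton_inj] at h₂₀; exact hyz h₂₀
  have ne₁₂ : f₁ ≠ f₂ := by
    rintro rfl; rw [Finset.inter_comm, h₀₁, Finset.singleton_inj] at h₂₀; exact hxz h₂₀
  have ne₀₂ : f₀ ≠ f₂ := by
    rintro rfl; rw [Finset.inter_comm, h₀₁, Finset.singleton_inj] at h₁₂; exact hxy h₁₂
  refine ⟨3, ![z, x, y], ![f₀, f₁, f₂], le_rfl, ?_, ?_, ?_, ?_, ?_⟩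
  · intro i j hij
    fin_cases i <;> fin_cases j <;> first | rfl | simp_all [eq_comm]
  · intro i j hij
    fin_cases i <;> fin_cases j <;> first | rfl | simp_all [eq_comm]
  · intro i
    fin_cases i <;> assumption
  · intro i
    fin_cases i <;> simpa
  · have no_far_pair : ∀ i j : ZMod 3, i ≠ j → i + 1 ≠ j → j + 1 ≠ i → False := by decide
    exact fun i j h h' h'' => (no_far_pair i j h h' h'').elim

section Star

variable {V : Type*} [DecidableEq V] {s : ℕ} {w : Fin (2 * s) → V} {b : V}

def pairIndex (a : Fin (2 * s)) : Fin s := ⟨a / 2, by omega⟩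

theorem pairIndex_ne_of_pairIndex_eq {i j k : Fin (2 * s)} (hij : i ≠ j) (hik : i ≠ k)
    (hjk : j ≠ k) (h : pairIndex i = pairIndex j) : pairIndex k ≠ pairIndex i := by
  simp only [pairIndex, ne_eq, Fin.ext_iff] at *
  omega

variable (w b) in
def starEdge (t : Fin s) : Finset V :=
  {w ⟨2 * t.1, by omega⟩, w ⟨2 * t.1 + 1, by omega⟩, b}

theorem center_mem_starEdge (t : Fin s) : b ∈ starEdge w b t := by
  simp [starEdge]

theorem mem_starEdge (hinj : Function.Injective w) (hb : ∀ a, w a ≠ b) {a : Fin (2 * s)}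
    {t : Fin s} : w a ∈ starEdge w b t ↔ pairIndex a = t := by
  simp only [starEdge, Finset.mem_insert, Finset.mem_singleton, hinj.eq_iff, hb, or_false,
    pairIndex, Fin.ext_iff]
  omega

theorem starEdge_inter_starEdge (hinj : Function.Injective w) (hb : ∀ a, w a ≠ b)
    {t t' : Fin s} (htt' : t ≠ t') : starEdge w b t ∩ starEdge w b t' = {b} := by
  ext x
  simp only [Finset.mem_inter, Finset.mem_singleton]
  constructor
  · rintro ⟨hx, hx'⟩
    simp only [starEdge, Finset.mem_insert, Finset.mem_singleton] at hx
    rcases hx with rfl | rfl | rfl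
    all_goals first
      | rfl
      | (rw [mem_starEdge hinj hb] at hx'
         simp only [pairIndex, Fin.ext_iff, ne_eq] at hx' htt'
         omega)
  · rintro rfl
    exact ⟨center_mem_starEdge t, center_mem_starEdge t'⟩

theorem starEdge_inter_image (hinj : Function.Injective w) (hb : ∀ a, w a ≠ b) (t : Fin s)
    (A : Finset (Fin (2 * s))) :
    starEdge w b t ∩ A.image w = (A.filter (pairIndex · = t)).image w := by
  ext x
  simp only [Finset.mem_inter, Finset.mem_image, Finset.mem_filter]
  constructor
  · rintro ⟨hx, a, ha, rfl⟩
    exact ⟨a, ⟨ha, (mem_starEdge hinj hb).1 hx⟩, rfl⟩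
  · rintro ⟨a, ⟨ha, hat⟩, rfl⟩
    exact ⟨(mem_starEdge hinj hb).2 hat, a, ha, rfl⟩

theorem triple_eq_image (i j k : Fin (2 * s)) :
    ({w i, w j, w k} : Finset V) = ({i, j, k} : Finset (Fin (2 * s))).image w := by
  simp [Finset.image_insert]

variable {E : Finset (Finset V)}

theorem triple_notMem_of_pairIndex_eq (hpath : ¬ ∃ h : Fin 3 → Finset V, IsLinearPath E 3 h)
    (hs : 3 ≤ s) (hinj : Function.Injective w) (hb : ∀ a, w a ≠ b)
    (hT : ∀ t, starEdge w b t ∈ E) {i j k : Fin (2 * s)} (hij : i ≠ j) (hik : i ≠ k)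
    (hjk : j ≠ k) (hpair : pairIndex i = pairIndex j) : ({w i, w j, w k} : Finset V) ∉ E := by
  intro he
  have hki := pairIndex_ne_of_pairIndex_eq hij hik hjk hpair
  have hkj : pairIndex k ≠ pairIndex j := hpair ▸ hki
  obtain ⟨t, -, ht⟩ := Finset.exists_mem_notMem_of_card_lt_card
    (s := {pairIndex i, pairIndex k}) (t := Finset.univ) <| by
      simpa using (Finset.card_le_two (a := pairIndex i) (b := pairIndex k)).trans_lt hs
  simp only [Finset.mem_insert, Finset.mem_singleton, not_or] at ht
  refine hpath ⟨_, isLinearPath_three (hT t) (hT (pairIndex k)) he ?_ ?_ ?_⟩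
  · simp [starEdge_inter_starEdge hinj hb ht.2]
  · rw [triple_eq_image, starEdge_inter_image hinj hb]
    simp [Finset.filter_insert, Finset.filter_singleton, hki.symm, hkj.symm]
  · rw [triple_eq_image, starEdge_inter_image hinj hb]
    simp [Finset.filter_insert, Finset.filter_singleton, Ne.symm ht.1, hpair ▸ Ne.symm ht.1,
      Ne.symm ht.2]

theorem triple_notMem_of_pairIndex_ne (hcyc : ¬ HasLinearCycle E)
    (hinj : Function.Injective w) (hb : ∀ a, w a ≠ b)
    (hT : ∀ t, starEdge w b t ∈ E) {i j k : Fin (2 * s)} (hij : pairIndex i ≠ pairIndex j)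
    (hik : pairIndex i ≠ pairIndex k) (hjk : pairIndex j ≠ pairIndex k) :
    ({w i, w j, w k} : Finset V) ∉ E := by
  intro he
  refine hcyc (hasLinearCycle_of_triangle_s15 (hT (pairIndex i)) he (hT (pairIndex j))
    (hinj.ne (ne_of_apply_ne pairIndex hij)) (hb j) (hb i) ?_ ?_
    (starEdge_inter_starEdge hinj hb hij.symm))
  · rw [triple_eq_image, starEdge_inter_image hinj hb]
    simp [Finset.filter_insert, Finset.filter_singleton, hij.symm, hik.symm]
  · rw [Finset.inter_comm, triple_eq_image, starEdge_inter_image hinj hb]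
    simp [Finset.filter_insert, Finset.filter_singleton, hij, hjk.symm]

end Star

/-- If the longest linear path has length at most 2 and a skeleton consists of `s ≥ 3`
hyperedges `v_{2i-1} v_{2i} b` through a common vertex `b`, then no hyperedge of `H`
avoids `b` among the `v_i`'s. -/
theorem star_skeleton_edges_contain_center {V : Type*} [DecidableEq V]
    (E : Finset (Finset V)) (hcyc : ¬ HasLinearCycle E)
    (hpath : ¬ ∃ h : Fin 3 → Finset V, IsLinearPath E 3 h)
    (s : ℕ) (hs : 3 ≤ s) (b : V) (w : Fin (2 * s) → V) (hinj : Function.Injective w)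
    (hb : ∀ i : Fin (2 * s), w i ≠ b)
    (hT : ∀ i : Fin s,
      ({w ⟨2 * i.1, by have := i.2; omega⟩, w ⟨2 * i.1 + 1, by have := i.2; omega⟩, b} :
        Finset V) ∈ E) :
    ∀ i j k : Fin (2 * s), i ≠ j → j ≠ k → i ≠ k →
      ({w i, w j, w k} : Finset V) ∉ E := by
  intro i j k hij hjk hik
  by_cases hpij : pairIndex i = pairIndex j
  · exact triple_notMem_of_pairIndex_eq hpath hs hinj hb hT hij hik hjk hpij
  by_cases hpik : pairIndex i = pairIndex k
  · rw [Finset.pair_comm]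
    exact triple_notMem_of_pairIndex_eq hpath hs hinj hb hT hik hij hjk.symm hpik
  by_cases hpjk : pairIndex j = pairIndex k
  · rw [Finset.insert_comm, Finset.pair_comm]
    exact triple_notMem_of_pairIndex_eq hpath hs hinj hb hT hjk hij.symm hik.symm hpjk
  exact triple_notMem_of_pairIndex_ne hcyc hinj hb hT hpij hpik hpjk
end

section
/- Let H be a 3-uniform hypergraph with no linear cycle, let T be a linear tree in H, and let v ∈ V(T) be strongly associated to a hyperedge abc of T with v ∉ {a,b,c}. Then v belongs to a hyperedge of T that intersects abc (i.e., v lies in a hyperedge of T neighboring abc). -/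
namespace IsLinearPath

variable {V : Type*} [DecidableEq V] {E T : Finset (Finset V)} {k : ℕ}

theorem mem {h : Fin k → Finset V} (hp : IsLinearPath T k h) (i : Fin k) : h i ∈ T :=
  hp.2.1 i

theorem inter_eq_empty {h : Fin k → Finset V} (hp : IsLinearPath T k h) {i j : Fin k}
    (hij : (i : ℕ) + 2 ≤ j) : h i ∩ h j = ∅ :=
  hp.2.2.2 i j hij

theorem card_inter_eq_one {h : Fin k → Finset V} (hp : IsLinearPath T k h) {i j : Fin k}
    (hij : (i : ℕ) + 1 = j) : (h i ∩ h j).card = 1 :=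
  hp.2.2.1 i j hij

theorem mono {h : Fin k → Finset V} (hp : IsLinearPath T k h) (hTE : T ⊆ E) :
    IsLinearPath E k h :=
  ⟨hp.1, fun i => hTE (hp.mem i), hp.2.2⟩

theorem single {e : Finset V} (he : e ∈ T) : IsLinearPath T 1 (fun _ => e) :=
  ⟨fun _ _ _ => Subsingleton.elim _ _, fun _ => he, by omega, by omega⟩

theorem rev {h : Fin k → Finset V} (hp : IsLinearPath T k h) :
    IsLinearPath T k (h ∘ Fin.rev) := by
  obtain ⟨hinj, hmem, hcons, hdisj⟩ := hp
  refine ⟨hinj.comp Fin.rev_injective, fun i => hmem _, fun i j hij => ?_, fun i j hij => ?_⟩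
  · rw [Function.comp_apply, Function.comp_apply, Finset.inter_comm]
    exact hcons _ _ (by simp only [Fin.val_rev]; omega)
  · rw [Function.comp_apply, Function.comp_apply, Finset.inter_comm]
    exact hdisj _ _ (by simp only [Fin.val_rev]; omega)

theorem cons {h : Fin (k + 1) → Finset V} {e : Finset V} (hp : IsLinearPath T (k + 1) h)
    (heT : e ∈ T) (he : e ∉ Set.range h) (he0 : (e ∩ h 0).card = 1)
    (hdisj : ∀ i ≠ 0, e ∩ h i = ∅) : IsLinearPath T (k + 2) (Fin.cons e h) := by
  obtain ⟨hinj, hmem, hcons, hdisj'⟩ := hp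
  refine ⟨Fin.cons_injective_iff.mpr ⟨he, hinj⟩, Fin.cases heT hmem, fun i j hij => ?_,
    fun i j hij => ?_⟩
  · induction j using Fin.cases with
    | zero => simp at hij
    | succ j =>
      induction i using Fin.cases with
      | zero =>
        have hj : j = 0 := Fin.ext (by simp only [Fin.val_succ, Fin.val_zero] at hij ⊢; omega)
        simpa [hj] using he0
      | succ i => exact hcons i j (by simpa using hij)
  · induction j using Fin.cases with
    | zero => simp at hij
    | succ j =>
      induction i using Fin.cases with
      | zero => exact hdisj j (by rintro rfl; simp at hij)
      | succ i => exact hdisj' i j (by simp only [Fin.val_succ] at hij; omega)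

theorem init {h : Fin (k + 1) → Finset V} (hp : IsLinearPath T (k + 1) h) :
    IsLinearPath T k (Fin.init h) := by
  obtain ⟨hinj, hmem, hcons, hdisj⟩ := hp
  exact ⟨hinj.comp (Fin.castSucc_injective k), fun i => hmem _, fun i j hij => hcons _ _ hij,
    fun i j hij => hdisj _ _ hij⟩

theorem exists_junction {h : Fin (k + 1) → Finset V} (hp : IsLinearPath T (k + 1) h) :
    ∃ c : Fin k → V, Function.Injective c ∧ ∀ j, h j.castSucc ∩ h j.succ = {c j} := by
  choose c hc using fun j : Fin k =>
    Finset.card_eq_one.mp (hp.card_inter_eq_one (i := j.castSucc) (j := j.succ) (by simp))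
  have hmem (j : Fin k) : c j ∈ h j.castSucc ∧ c j ∈ h j.succ :=
    Finset.mem_inter.mp (hc j ▸ Finset.mem_singleton_self _)
  refine ⟨c, fun i j hij => ?_, hc⟩
  by_contra hne
  rcases Fin.lt_or_lt_of_ne hne with hlt | hlt
  · have := hp.inter_eq_empty (i := i.castSucc) (j := j.succ)
      (by simp only [Fin.val_castSucc, Fin.val_succ]; omega)
    exact Finset.notMem_empty _ (this ▸ Finset.mem_inter.mpr ⟨(hmem i).1, hij ▸ (hmem j).2⟩)
  · have := hp.inter_eq_empty (i := j.castSucc) (j := i.succ)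
      (by simp only [Fin.val_castSucc, Fin.val_succ]; omega)
    exact Finset.notMem_empty _ (this ▸ Finset.mem_inter.mpr ⟨(hmem j).1, hij ▸ (hmem i).2⟩)

section Closing

/- A linear path `h` of `n + 2` edges closed by an edge `g` is the cyclic sequence
`Fin.snoc h g`, indexed by `Fin (n + 3)`, which is definitionally `ZMod (n + 3)`. Its vertex
between the edges `i - 1` and `i` is `Fin.cons a (Fin.snoc c b) i`, where `c` lists the junction
vertices of `h`, `a ∈ g ∩ h 0` and `b ∈ h (n + 1) ∩ g`. -/

variable {n : ℕ} {h : Fin (n + 2) → Finset V} {g : Finset V} {a b : V}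

theorem snoc_inter_snoc_add_one {c : Fin (n + 1) → V}
    (hc : ∀ j, h j.castSucc ∩ h j.succ = {c j}) (ha : g ∩ h 0 = {a})
    (hb : h (Fin.last (n + 1)) ∩ g = {b}) (i : Fin (n + 3)) :
    (Fin.snoc h g : Fin (n + 3) → Finset V) i ∩
        (Fin.snoc h g : Fin (n + 3) → Finset V) (i + 1) =
      {(Fin.cons a (Fin.snoc c b) : Fin (n + 3) → V) (i + 1)} := by
  induction i using Fin.lastCases with
  | last => simpa [Fin.last_add_one] using ha
  | cast j =>
    rw [Fin.coeSucc_eq_succ]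
    induction j using Fin.lastCases with
    | last => simpa using hb
    | cast j =>
      rw [Fin.cons_succ, Fin.snoc_castSucc, Fin.succ_castSucc, Fin.snoc_castSucc,
        Fin.snoc_castSucc]
      exact hc j

theorem snoc_inter_snoc_eq_empty (hp : IsLinearPath E (n + 2) h)
    (hmid : ∀ i, i ≠ 0 → i ≠ Fin.last (n + 1) → g ∩ h i = ∅) (i j : Fin (n + 3))
    (hij : i ≠ j) (hij' : i + 1 ≠ j) (hji' : j + 1 ≠ i) :
    (Fin.snoc h g : Fin (n + 3) → Finset V) i ∩
      (Fin.snoc h g : Fin (n + 3) → Finset V) j = ∅ := by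
  have hg_disj (j : Fin (n + 2)) (h1 : Fin.last (n + 2) + 1 ≠ j.castSucc)
      (h2 : j.castSucc + 1 ≠ Fin.last (n + 2)) : g ∩ h j = ∅ := by
    refine hmid j (fun hj0 => h1 ?_) (fun hjl => h2 ?_)
    · rw [hj0, Fin.last_add_one, Fin.castSucc_zero]
    · rw [hjl, Fin.coeSucc_eq_succ, Fin.succ_last]
  induction i using Fin.lastCases with
  | last =>
    induction j using Fin.lastCases with
    | last => exact absurd rfl hij
    | cast j => simpa using hg_disj j hij' hji'
  | cast i =>
    induction j using Fin.lastCases with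
    | last => simpa [Finset.inter_comm] using hg_disj i hji' hij'
    | cast j =>
      simp only [Fin.snoc_castSucc]
      simp only [ne_eq, Fin.coeSucc_eq_succ, Fin.ext_iff, Fin.val_succ, Fin.val_castSucc]
        at hij hij' hji'
      rcases Nat.lt_or_gt_of_ne hij with hlt | hlt
      · exact hp.inter_eq_empty (by omega)
      · rw [Finset.inter_comm]; exact hp.inter_eq_empty (by omega)

theorem cons_snoc_injective {c : Fin (n + 1) → V} (hcinj : Function.Injective c)
    (hc : ∀ j, h j.castSucc ∩ h j.succ = {c j}) (hag : a ∈ g) (hbg : b ∈ g) (hab : a ≠ b)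
    (hmeet : ∀ i, ∀ x ∈ g, x ∈ h i →
      (i = 0 ∧ x = a) ∨ (i = Fin.last (n + 1) ∧ x = b)) :
    Function.Injective (Fin.cons a (Fin.snoc c b) : Fin (n + 3) → V) := by
  have hcmem (j : Fin (n + 1)) : c j ∈ h j.castSucc ∧ c j ∈ h j.succ :=
    Finset.mem_inter.mp (hc j ▸ Finset.mem_singleton_self _)
  refine Fin.cons_injective_iff.mpr ⟨?_, Fin.snoc_injective_iff.mpr ⟨hcinj, ?_⟩⟩
  · rintro ⟨j, hj⟩
    induction j using Fin.lastCases with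
    | last => exact hab (by simpa using hj.symm)
    | cast j =>
      simp only [Fin.snoc_castSucc] at hj
      rcases hmeet j.succ a hag (hj ▸ (hcmem j).2) with ⟨hj0, -⟩ | ⟨-, hab'⟩
      · exact Fin.succ_ne_zero j hj0
      · exact hab hab'
  · rintro ⟨j, hj⟩
    rcases hmeet j.castSucc b hbg (hj ▸ (hcmem j).1) with ⟨-, hba⟩ | ⟨hjl, -⟩
    · exact hab hba.symm
    · exact Fin.castSucc_ne_last j hjl

theorem hasLinearCycle_of_closing_edge (hp : IsLinearPath E (n + 2) h) (hg : g ∈ E)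
    (hag : a ∈ g) (ha : a ∈ h 0) (hbg : b ∈ g) (hb : b ∈ h (Fin.last (n + 1)))
    (hab : a ≠ b) (hmeet : ∀ i, ∀ x ∈ g, x ∈ h i →
      (i = 0 ∧ x = a) ∨ (i = Fin.last (n + 1) ∧ x = b)) :
    HasLinearCycle E := by
  obtain ⟨c, hcinj, hc⟩ := hp.exists_junction
  have hgh : g ∉ Set.range h := by
    rintro ⟨i, rfl⟩
    rcases hmeet i a hag hag with ⟨rfl, -⟩ | ⟨-, rfl⟩
    · rcases hmeet 0 b hbg hbg with ⟨-, rfl⟩ | ⟨h0, -⟩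
      · exact hab rfl
      · exact Fin.last_pos.ne h0
    · exact hab rfl
  have ha' : g ∩ h 0 = {a} := Finset.eq_singleton_iff_unique_mem.mpr
    ⟨Finset.mem_inter.mpr ⟨hag, ha⟩, fun x hx => by
      obtain ⟨hxg, hxh⟩ := Finset.mem_inter.mp hx
      rcases hmeet 0 x hxg hxh with ⟨-, rfl⟩ | ⟨h0, -⟩
      · rfl
      · exact absurd h0 Fin.last_pos.ne⟩
  have hb' : h (Fin.last (n + 1)) ∩ g = {b} := Finset.eq_singleton_iff_unique_mem.mpr
    ⟨Finset.mem_inter.mpr ⟨hb, hbg⟩, fun x hx => by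
      obtain ⟨hxh, hxg⟩ := Finset.mem_inter.mp hx
      rcases hmeet _ x hxg hxh with ⟨h0, -⟩ | ⟨-, rfl⟩
      · exact absurd h0.symm Fin.last_pos.ne
      · rfl⟩
  have hmid (i : Fin (n + 2)) (hi0 : i ≠ 0) (hil : i ≠ Fin.last (n + 1)) : g ∩ h i = ∅ :=
    Finset.eq_empty_of_forall_notMem fun x hx => by
      obtain ⟨hxg, hxh⟩ := Finset.mem_inter.mp hx
      rcases hmeet i x hxg hxh with ⟨h0, -⟩ | ⟨hl, -⟩
      exacts [hi0 h0, hil hl]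
  exact ⟨n + 3, _, _, by omega, cons_snoc_injective hcinj hc hag hbg hab hmeet,
    Fin.snoc_injective_iff.mpr ⟨hp.1, hgh⟩,
    fun i => by induction i using Fin.lastCases <;> simp [hg, hp.mem],
    snoc_inter_snoc_add_one hc ha' hb', snoc_inter_snoc_eq_empty hp hmid⟩

end Closing

end IsLinearPath

section Endpoints

variable {α : Type*} {k : ℕ} {h : Fin k → Finset α} {w : α} {j : Fin k}

theorem mem_cons_iff_eq_succ {e : Finset α} (hwe : w ∉ e) (hw : ∀ i, w ∈ h i ↔ i = j)
    (i : Fin (k + 1)) : w ∈ (Fin.cons e h : Fin (k + 1) → Finset α) i ↔ i = j.succ := by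
  induction i using Fin.cases with
  | zero => simp [hwe, (Fin.succ_ne_zero j).symm]
  | succ i => simp [hw]

theorem mem_comp_rev_iff (hw : ∀ i, w ∈ h i ↔ i = j) (i : Fin k) :
    w ∈ (h ∘ Fin.rev) i ↔ i = j.rev := by
  simp [hw, Fin.rev_eq_iff]

end Endpoints

namespace IsLinearTree

variable {V : Type*} [DecidableEq V] {S : Finset V} {T : Finset (Finset V)}

theorem subset_of_mem (ht : IsLinearTree S T) {g : Finset V} (hg : g ∈ T) : g ⊆ S := by
  induction ht with
  | single v => simp at hg
  | extend e _ _ _ ih =>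
    rcases Finset.mem_insert.mp hg with rfl | hg
    · exact Finset.subset_union_right
    · exact (ih hg).trans Finset.subset_union_left

theorem isLinearPath_cons (ht : IsLinearTree S T) {e : Finset V} {x : V} (he : e.card = 3)
    (heS : e ∩ S = {x}) {k : ℕ} {h : Fin (k + 1) → Finset V} (hp : IsLinearPath T (k + 1) h)
    (hx : ∀ i, x ∈ h i ↔ i = 0) : IsLinearPath (insert e T) (k + 2) (Fin.cons e h) := by
  have hxe : x ∈ e := (Finset.mem_inter.mp (heS ▸ Finset.mem_singleton_self x)).1
  have hcap (i) : e ∩ h i ⊆ {x} :=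
    heS ▸ Finset.inter_subset_inter_left (ht.subset_of_mem (hp.mem i))
  refine (hp.mono (Finset.subset_insert e T)).cons (Finset.mem_insert_self e T) ?_ ?_ ?_
  · rintro ⟨i, rfl⟩
    rw [Finset.inter_eq_left.mpr (ht.subset_of_mem (hp.mem i))] at heS
    simp [heS] at he
  · rw [Finset.card_eq_one]
    exact ⟨x, (hcap 0).antisymm (Finset.singleton_subset_iff.mpr
      (Finset.mem_inter.mpr ⟨hxe, (hx 0).2 rfl⟩))⟩
  · intro i hi
    exact ((Finset.subset_singleton_iff.mp (hcap i)).resolve_right fun hx' =>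
      hi ((hx i).1 (Finset.mem_inter.mp (hx' ▸ Finset.mem_singleton_self x)).2))

theorem mem_cons_iff_eq_zero (ht : IsLinearTree S T) {e : Finset V} {k : ℕ}
    {h : Fin k → Finset V} (hp : IsLinearPath T k h) {v : V} (hve : v ∈ e) (hvS : v ∉ S)
    (i : Fin (k + 1)) : v ∈ (Fin.cons e h : Fin (k + 1) → Finset V) i ↔ i = 0 := by
  induction i using Fin.cases with
  | zero => simpa using hve
  | succ i => simpa using fun hv => hvS (ht.subset_of_mem (hp.mem i) hv)

theorem exists_path_between (ht : IsLinearTree S T) {v w : V} (hv : v ∈ S) (hw : w ∈ S)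
    (hvw : v ≠ w) : ∃ k h, IsLinearPath T (k + 1) h ∧ (∀ i, v ∈ h i ↔ i = 0) ∧
      ∀ i, w ∈ h i ↔ i = Fin.last k := by
  induction ht generalizing v w with
  | single x => simp only [Finset.mem_singleton] at hv hw; exact absurd (hv.trans hw.symm) hvw
  | @extend S T e ht he3 heS ih =>
    obtain ⟨x, hx⟩ := Finset.card_eq_one.mp heS
    obtain ⟨hxe, hxS⟩ := Finset.mem_inter.mp (hx ▸ Finset.mem_singleton_self x)
    have from_new (v w : V) (hve : v ∈ e) (hvS : v ∉ S) (hw : w ∈ S ∪ e) (hvw : v ≠ w) :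
        ∃ k h, IsLinearPath (insert e T) (k + 1) h ∧ (∀ i, v ∈ h i ↔ i = 0) ∧
          ∀ i, w ∈ h i ↔ i = Fin.last k := by
      by_cases hwe : w ∈ e
      · exact ⟨0, fun _ => e, .single (Finset.mem_insert_self e T),
          fun i => iff_of_true hve (Fin.fin_one_eq_zero i),
          fun i => iff_of_true hwe (Fin.fin_one_eq_zero i)⟩
      obtain ⟨k, h, hp, hxh, hwh⟩ :=
        ih hxS ((Finset.mem_union.mp hw).resolve_right hwe) fun hxw => hwe (hxw ▸ hxe)
      exact ⟨k + 1, Fin.cons e h, ht.isLinearPath_cons he3 hx hp hxh,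
        ht.mem_cons_iff_eq_zero hp hve hvS, by simpa using mem_cons_iff_eq_succ hwe hwh⟩
    by_cases hvS : v ∈ S
    · by_cases hwS : w ∈ S
      · obtain ⟨k, h, hp, hvh, hwh⟩ := ih hvS hwS hvw
        exact ⟨k, h, hp.mono (Finset.subset_insert e T), hvh, hwh⟩
      · obtain ⟨k, h, hp, hwh, hvh⟩ := from_new w v ((Finset.mem_union.mp hw).resolve_left hwS)
          hwS (Finset.mem_union_left e hvS) hvw.symm
        exact ⟨k, h ∘ Fin.rev, hp.rev, by simpa using mem_comp_rev_iff hvh,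
          by simpa using mem_comp_rev_iff hwh⟩
    · exact from_new v w ((Finset.mem_union.mp hv).resolve_left hvS) hvS hw hvw

theorem exists_path_to_edge (ht : IsLinearTree S T) {e : Finset V} {v : V} (he : e ∈ T)
    (hv : v ∈ S) : ∃ k h, IsLinearPath T (k + 1) h ∧ (∀ i, v ∈ h i ↔ i = 0) ∧
      h (Fin.last k) = e := by
  induction ht generalizing e v with
  | single x => simp at he
  | @extend S T e' ht he3 heS ih =>
    obtain ⟨x, hx⟩ := Finset.card_eq_one.mp heS
    obtain ⟨hxe, hxS⟩ := Finset.mem_inter.mp (hx ▸ Finset.mem_singleton_self x)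
    rcases Finset.mem_insert.mp he with rfl | heT
    · by_cases hve : v ∈ e
      · exact ⟨0, fun _ => e, .single (Finset.mem_insert_self e T),
          fun i => iff_of_true hve (Fin.fin_one_eq_zero i), rfl⟩
      obtain ⟨k, h, hp, hxh, hvh⟩ := ht.exists_path_between hxS
        ((Finset.mem_union.mp hv).resolve_right hve) fun hxv => hve (hxv ▸ hxe)
      exact ⟨k + 1, Fin.cons e h ∘ Fin.rev, (ht.isLinearPath_cons he3 hx hp hxh).rev,
        by simpa using mem_comp_rev_iff (mem_cons_iff_eq_succ hve hvh), by simp⟩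
    · by_cases hvS : v ∈ S
      · obtain ⟨k, h, hp, hvh, hhe⟩ := ih heT hvS
        exact ⟨k, h, hp.mono (Finset.subset_insert e' T), hvh, hhe⟩
      obtain ⟨k, h, hp, hxh, rfl⟩ := ih heT hxS
      exact ⟨k + 1, Fin.cons e' h, ht.isLinearPath_cons he3 hx hp hxh,
        ht.mem_cons_iff_eq_zero hp ((Finset.mem_union.mp hv).resolve_left hvS) hvS,
        by rw [← Fin.succ_last, Fin.cons_succ]⟩

end IsLinearTree

theorem exists_mem_hSupport_of_mem {V : Type*} [DecidableEq V] {E : Finset (Finset V)}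
    {e : Finset V} {v w : V} (he : e.card = 3) (hs : 2 ≤ (hSupport E e v).card) (hw : w ∈ e) :
    ∃ p ∈ hSupport E e v, w ∈ p := by
  by_contra! hnot
  obtain ⟨p, hp, q, hq, hpq⟩ := Finset.one_lt_card.mp hs
  have hsub (p) (hp : p ∈ hSupport E e v) : p = e.erase w := by
    obtain ⟨hpe, hcard⟩ := Finset.mem_powersetCard.mp (Finset.mem_filter.mp hp).1
    refine Finset.eq_of_subset_of_card_le (fun x hx => Finset.mem_erase.mpr
      ⟨fun hxw => hnot p hp (hxw ▸ hx), hpe hx⟩) ?_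
    rw [Finset.card_erase_of_mem hw, he, hcard]
  exact hpq ((hsub p hp).trans (hsub q hq).symm)

theorem IsLinearPath.hasLinearCycle_of_stronglyAssoc {V : Type*} [DecidableEq V]
    {E : Finset (Finset V)} {n : ℕ} {h : Fin (n + 3) → Finset V} {v : V}
    (hp : IsLinearPath E (n + 3) h) (hv : ∀ i, v ∈ h i ↔ i = 0)
    (he : (h (Fin.last (n + 2))).card = 3) (hassoc : StronglyAssoc E (h (Fin.last (n + 2))) v) :
    HasLinearCycle E := by
  obtain ⟨hve, hsupp⟩ := hassoc
  obtain ⟨c, -, hc⟩ := hp.exists_junction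
  set w := c (Fin.last (n + 1))
  have hw : h (Fin.last (n + 1)).castSucc ∩ h (Fin.last (n + 2)) = {w} := hc _
  obtain ⟨hwh, hwe⟩ := Finset.mem_inter.mp (hw ▸ Finset.mem_singleton_self w)
  obtain ⟨p, hpS, hwp⟩ := exists_mem_hSupport_of_mem he hsupp hwe
  obtain ⟨⟨hpe, -⟩, hpE⟩ := Finset.mem_filter.mp hpS |>.imp_left Finset.mem_powersetCard.mp
  refine hp.init.hasLinearCycle_of_closing_edge hpE (Finset.mem_insert_self v p) ((hv 0).2 rfl)
    (Finset.mem_insert_of_mem hwp) hwh (fun hvw => hve (hvw ▸ hwe)) fun i x hx hxi => ?_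
  rcases Finset.mem_insert.mp hx with rfl | hxp
  · exact .inl ⟨Fin.castSucc_eq_zero_iff.mp ((hv _).1 hxi), rfl⟩
  · by_cases hil : i = Fin.last (n + 1)
    · subst hil
      exact .inr ⟨rfl, Finset.mem_singleton.mp (hw ▸ Finset.mem_inter.mpr ⟨hxi, hpe hxp⟩)⟩
    · have := hp.inter_eq_empty (i := i.castSucc) (j := Fin.last (n + 2))
        (by simp only [Fin.val_castSucc, Fin.val_last]; have := Fin.val_lt_last hil; omega)
      exact absurd (this ▸ Finset.mem_inter.mpr ⟨hxi, hpe hxp⟩) (Finset.notMem_empty x)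

/-- If a vertex `v` of a linear tree `T` is strongly associated to a hyperedge `e` of
`T`, then `v` lies in a hyperedge of `T` meeting `e`. -/
theorem strongly_assoc_in_neighbor {V : Type*} [DecidableEq V] (E : Finset (Finset V))
    (h3 : ∀ e ∈ E, e.card = 3) (hcyc : ¬ HasLinearCycle E)
    (S : Finset V) (T : Finset (Finset V)) (hT : IsLinearTree S T) (hTE : T ⊆ E)
    (e : Finset V) (heT : e ∈ T) (v : V) (hvS : v ∈ S) (hassoc : StronglyAssoc E e v) :
    ∃ f ∈ T, v ∈ f ∧ (f ∩ e).Nonempty := by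
  obtain ⟨k, h, hp, hv, rfl⟩ := hT.exists_path_to_edge heT hvS
  rcases k with _ | _ | n
  · exact absurd ((hv 0).2 rfl) hassoc.1
  · have hcard : (h 0 ∩ h (Fin.last 1)).card = 1 := hp.card_inter_eq_one rfl
    exact ⟨h 0, hp.mem 0, (hv 0).2 rfl, Finset.card_pos.mp (by rw [hcard]; exact one_pos)⟩
  · exact absurd ((hp.mono hTE).hasLinearCycle_of_stronglyAssoc hv (h3 _ (hTE heT)) hassoc) hcyc
end
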